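/- arXiv:1902.01278 — 4 statements merged into one kernel-verified Lean document; each statement's English description precedes it below -/
import Mathlib

section
/- If f, g, and h are real-rooted polynomials with nonnegative coefficients such that f interlaces g and f interlaces h, then f interlaces g + h. -/
open Polynomial

/-- The roots of a real polynomial, listed in ascending order. -/
noncomputable def ascRoots (p : Polynomial ℝ) : List ℝ := p.roots.sort (· ≤ ·)

/-- A real polynomial is real-rooted if it has as many real roots
(with multiplicity) as its degree. -/
def RealRooted (p : Polynomial ℝ) : Prop := p.roots.card = p.natDegree

/-- `Interlaces g f` means `g ≪ f`: both are real-rooted, and either they have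
equal degrees `d` with roots `v_d ≤ u_d ≤ v_{d-1} ≤ ⋯ ≤ v_1 ≤ u_1`, or
`deg f = deg g + 1 = d` with `u_d ≤ v_{d-1} ≤ ⋯ ≤ v_1 ≤ u_1`, where `u` are the
roots of `f` and `v` are the roots of `g` (here written with ascending
indexing). -/
def Interlaces (g f : Polynomial ℝ) : Prop :=
  RealRooted f ∧ RealRooted g ∧
  ((f.natDegree = g.natDegree ∧
      (∀ i, i < f.natDegree → (ascRoots g)[i]! ≤ (ascRoots f)[i]!) ∧
      (∀ i, i + 1 < f.natDegree → (ascRoots f)[i]! ≤ (ascRoots g)[i + 1]!)) ∨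
   (f.natDegree = g.natDegree + 1 ∧
      (∀ i, i < g.natDegree →
        (ascRoots f)[i]! ≤ (ascRoots g)[i]! ∧ (ascRoots g)[i]! ≤ (ascRoots f)[i + 1]!)))

/-!
Write `N_p(t)` for the number of roots of `p` in `[t, ∞)`, counted with multiplicity. For
real-rooted `f` and `g`, `f ≪ g` says exactly that `N_f ≤ N_g ≤ N_f + 1` everywhere.

A root of `f` of multiplicity `m` is then a root of multiplicity at least `m - 1` of `g` and of
`h`, so after dividing `f`, `g` and `h` by these common linear factors we may assume that the roots
of `f` are simple. If `u` is the `k`-th largest root of `f`, the count inequalities force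
`(-1)^k g(u) ≥ 0`, because a polynomial with positive leading coefficient and exactly `j` roots
above a non-root `t` has the sign of `(-1)^j` at `t`. The same holds for `h`, hence for `g + h`.
Conversely, for a polynomial `p` with positive leading coefficient and `deg p ≤ deg f + 1`, these
sign conditions force `N_f ≤ N_p`, by induction over the roots of `f` from the top, and
`N_p ≤ N_f + 1`, by the same induction from the bottom. The lower bound gives `p` at least
`deg f ≥ deg p - 1` real roots, so `p` is real-rooted, as `deg p` and its number of real roots
have the same parity.
-/

namespace Multiset

theorem countP_mono_left {α : Type*} (M : Multiset α) {p q : α → Prop} [DecidablePred p]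
    [DecidablePred q] (h : ∀ x, p x → q x) : M.countP p ≤ M.countP q := by
  simpa only [countP_eq_card_filter] using card_le_card (monotone_filter_right M h)

variable {α : Type*} [LinearOrder α]

theorem countP_le_eq_count_add_countP_lt (M : Multiset α) (t : α) :
    M.countP (t ≤ ·) = M.count t + M.countP (t < ·) := by
  induction M using Multiset.induction with
  | empty => simp
  | cons a M ih =>
    rcases lt_trichotomy t a with h | rfl | h
    · simp [ih, h, h.le, h.ne]; omega
    · simp [ih]; omega
    · simp [ih, h.not_ge, h.not_gt, h.ne']

theorem card_eq_countP_lt_add_countP_le (M : Multiset α) (t : α) :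
    card M = M.countP (· < t) + M.countP (t ≤ ·) := by
  rw [M.card_eq_countP_add_countP (· < t), add_right_inj]
  simp only [not_lt]

theorem countP_lt_le_of_forall_countP_le {A B : Multiset α} {c : ℕ}
    (h : ∀ t, A.countP (t ≤ ·) ≤ B.countP (t ≤ ·) + c) (t : α) :
    A.countP (t < ·) ≤ B.countP (t < ·) + c := by
  classical
  obtain hA | ⟨b, hb, hbmin⟩ := (A.filter (t < ·)).toFinset.eq_empty_or_nonempty.imp_right
    fun hne => (A.filter (t < ·)).toFinset.exists_min_image id hne
  · rw [countP_eq_zero.2 fun x hx htx => by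
      simpa [hA] using mem_toFinset.2 (mem_filter.2 ⟨hx, htx⟩)]
    exact Nat.zero_le _
  simp only [mem_toFinset, mem_filter, id] at hb hbmin
  calc A.countP (t < ·) = A.countP (b ≤ ·) :=
        countP_congr rfl fun x hx => propext ⟨fun htx => hbmin x ⟨hx, htx⟩, hb.2.trans_le⟩
    _ ≤ B.countP (b ≤ ·) + c := h b
    _ ≤ B.countP (t < ·) + c := by
        gcongr
        exact B.countP_mono_left fun x => hb.2.trans_le

/-- Peel off the smallest element `a` of `S`: if the bound failed at `a`, then `a ∉ M` and exactly
`#S - 1 - c` elements of `M` lie above `a`, so the two sign conditions at `a` contradict each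
other. -/
theorem countP_le_countP_add_of_sign {φ : α → ℝ} {M : Multiset α}
    (hφ : ∀ t ∉ M, 0 < (-1) ^ M.countP (t < ·) * φ t) (c : ℕ) {S : Multiset α}
    (hS : S.Nodup)
    (hsign : ∀ u ∈ S, 0 ≤ (-1) ^ (c + S.countP (u ≤ ·)) * φ u) (t : α) :
    S.countP (t ≤ ·) ≤ M.countP (t ≤ ·) + c := by
  classical
  obtain ⟨S, rfl⟩ : ∃ s : Finset α, s.val = S := ⟨⟨S, hS⟩, rfl⟩
  clear hS
  induction S using Finset.induction_on_min generalizing t with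
  | empty => simp
  | insert a s has ih =>
    rw [Finset.insert_val_of_notMem fun h => (has a h).false] at hsign ⊢
    have hs : ∀ u ∈ s.val, 0 ≤ (-1) ^ (c + s.val.countP (u ≤ ·)) * φ u := fun u hu => by
      simpa [countP_cons_of_neg _ (has u hu).not_ge] using hsign u (mem_cons_of_mem hu)
    replace ih := fun t => ih t hs
    have hcard_le : s.card ≤ M.countP (a < ·) + c := by
      rcases s.eq_empty_or_nonempty with rfl | hne
      · simp
      calc s.card = s.val.countP (s.min' hne ≤ ·) :=
            (countP_eq_card.2 fun x hx => s.min'_le x hx).symm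
        _ ≤ M.countP (s.min' hne ≤ ·) + c := ih _
        _ ≤ M.countP (a < ·) + c := by
            gcongr
            exact M.countP_mono_left fun x => (has _ (s.min'_mem hne)).trans_le
    have ha : s.card + 1 ≤ M.countP (a ≤ ·) + c := by
      by_contra! hlt
      have hsplit := M.countP_le_eq_count_add_countP_lt a
      have hk : M.countP (a < ·) + c = s.card := by omega
      have hpos := hφ a (count_eq_zero.1 (by omega))
      have hnonneg := hsign a (mem_cons_self a _)
      rw [countP_cons_of_pos _ le_rfl, countP_eq_card.2 fun x hx => (has x hx).le,
        Finset.card_val, ← hk,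
        show c + (M.countP (a < ·) + c + 1) = M.countP (a < ·) + 1 + 2 * c by ring,
        pow_add, pow_add, pow_mul] at hnonneg
      simp only [pow_one, even_two, Even.neg_pow, one_pow, mul_one] at hnonneg
      linarith
    rcases lt_or_ge a t with hat | hta
    · rw [countP_cons_of_neg _ hat.not_ge]
      exact ih t
    · rw [countP_cons_of_pos _ hta, countP_eq_card.2 fun x hx => hta.trans (has x hx).le]
      exact ha.trans (by gcongr; exact M.countP_mono_left fun x => hta.trans)

theorem neg_one_pow_countP_lt_mul_prod_pos {M : Multiset ℝ} {t : ℝ} (ht : t ∉ M) :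
    0 < (-1) ^ M.countP (t < ·) * (M.map (t - ·)).prod := by
  induction M using Multiset.induction with
  | empty => simp
  | cons a M ih =>
    obtain ⟨hta, htM⟩ : t ≠ a ∧ t ∉ M := by simpa using ht
    have ih := ih htM
    rcases hta.lt_or_gt with h | h
    · rw [countP_cons_of_pos _ h, map_cons, prod_cons, pow_succ]
      nlinarith
    · rw [countP_cons_of_neg _ h.not_gt, map_cons, prod_cons]
      nlinarith

end Multiset

namespace List

variable {α : Type*} [LinearOrder α]

theorem SortedLE.le_getElem_iff {l : List α} (hl : l.SortedLE) {i : ℕ} (hi : i < l.length)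
    (t : α) : t ≤ l[i] ↔ l.length - i ≤ l.countP (t ≤ ·) := by
  constructor
  · intro ht
    have hdrop : (l.drop i).countP (t ≤ ·) = l.length - i := by
      rw [countP_eq_length.2, length_drop]
      intro x hx
      obtain ⟨j, hj, rfl⟩ := mem_drop_iff_getElem.1 hx
      simpa using ht.trans (hl.getElem_le_getElem_of_le (by omega))
    exact hdrop ▸ (drop_sublist i l).countP_le
  · intro hc
    by_contra! hlt
    have htake : (l.take (i + 1)).countP (t ≤ ·) = 0 := by
      rw [countP_eq_zero]
      intro x hx
      obtain ⟨j, hj, rfl⟩ := mem_take_iff_getElem.1 hx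
      simpa using (hl.getElem_le_getElem_of_le (by omega)).trans_lt hlt
    have hsplit := countP_append (l₁ := l.take (i + 1)) (l₂ := l.drop (i + 1)) (p := (t ≤ ·))
    rw [take_append_drop, htake] at hsplit
    have := (l.drop (i + 1)).countP_le_length (p := (t ≤ ·))
    simp only [length_drop] at this
    omega

theorem SortedLE.forall_getElem!_le_iff [Inhabited α] {l₁ l₂ : List α} (h₁ : l₁.SortedLE)
    (h₂ : l₂.SortedLE) {k : ℕ} (hlen : l₂.length ≤ l₁.length + k) :
    (∀ i, i < l₁.length → i + k < l₂.length → l₁[i]! ≤ l₂[i + k]!) ↔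
      ∀ t, l₁.countP (t ≤ ·) ≤
        l₂.countP (t ≤ ·) + (l₁.length + k - l₂.length) := by
  constructor
  · intro h t
    by_contra! hlt
    have ha : l₁.countP (t ≤ ·) ≤ l₁.length := countP_le_length
    have hi : l₁.length - l₁.countP (t ≤ ·) < l₁.length := by omega
    have hik : l₁.length - l₁.countP (t ≤ ·) + k < l₂.length := by omega
    have hle := h _ hi hik
    rw [getElem!_pos l₁ _ hi, getElem!_pos l₂ _ hik] at hle
    have := (h₂.le_getElem_iff hik t).1 (((h₁.le_getElem_iff hi t).2 (by omega)).trans hle)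
    omega
  · intro h i hi hik
    rw [getElem!_pos l₁ i hi, getElem!_pos l₂ _ hik]
    have := (h₁.le_getElem_iff hi l₁[i]).1 le_rfl
    exact (h₂.le_getElem_iff hik _).2 (by have := h l₁[i]; omega)

end List

namespace Polynomial

theorem eval_pos_of_forall_not_isRoot {p : ℝ[X]} (hp : 0 < p.leadingCoeff)
    (hroot : ∀ x, ¬p.IsRoot x) (x : ℝ) : 0 < p.eval x := by
  obtain ⟨y, hy⟩ := (p.isEquivalent_atTop_lead.eventually_pos
    ((Filter.eventually_gt_atTop 0).mono fun y hy => mul_pos hp (pow_pos hy _))).exists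
  by_contra hx
  obtain ⟨z, hz⟩ := intermediate_value_univ x y p.continuous ⟨not_lt.1 hx, hy.le⟩
  exact hroot z hz

theorem even_natDegree_of_forall_not_isRoot {p : ℝ[X]} (hroot : ∀ x, ¬p.IsRoot x) :
    Even p.natDegree := by
  wlog hp : 0 < p.leadingCoeff generalizing p
  · have hp0 : p.leadingCoeff ≠ 0 := by
      rw [Ne, leadingCoeff_eq_zero]; rintro rfl; exact hroot 0 (by simp)
    simpa using this (p := -p) (by simpa using hroot) (by rw [leadingCoeff_neg]; grind)
  by_contra hodd
  obtain ⟨x, hx⟩ := (p.isEquivalent_atBot_lead.eventually_neg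
    ((Filter.eventually_lt_atBot 0).mono fun x hx =>
      mul_neg_of_pos_of_neg hp ((Nat.not_even_iff_odd.1 hodd).pow_neg hx))).exists
  exact hx.not_gt (eval_pos_of_forall_not_isRoot hp hroot x)

theorem even_natDegree_sub_card_roots (p : ℝ[X]) :
    Even (p.natDegree - Multiset.card p.roots) := by
  rcases eq_or_ne p 0 with rfl | hp
  · simp
  obtain ⟨q, hpq, hdeg, hq⟩ := p.exists_prod_multiset_X_sub_C_mul
  have hq0 : q ≠ 0 := by rintro rfl; simp at hpq; exact hp hpq.symm
  rw [← hdeg, Nat.add_sub_cancel_left]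
  exact even_natDegree_of_forall_not_isRoot fun x hx => by simpa [hq] using (mem_roots hq0).2 hx

theorem monic_multiset_prod_X_sub_C (R : Multiset ℝ) : (R.map fun a => X - C a).prod.Monic :=
  monic_multiset_prod_of_monic _ _ fun a _ => monic_X_sub_C a

theorem neg_one_pow_countP_lt_mul_eval_pos {p : ℝ[X]} (hp : 0 < p.leadingCoeff) {t : ℝ}
    (ht : t ∉ p.roots) : 0 < (-1) ^ p.roots.countP (t < ·) * p.eval t := by
  obtain ⟨q, hpq, -, hq⟩ := p.exists_prod_multiset_X_sub_C_mul
  have hq0 : q ≠ 0 := by rintro rfl; rw [mul_zero] at hpq; simp [← hpq] at hp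
  have hqpos : 0 < q.eval t := by
    refine eval_pos_of_forall_not_isRoot ?_ (fun x hx => by simpa [hq] using (mem_roots hq0).2 hx) t
    rwa [← hpq, leadingCoeff_monic_mul (monic_multiset_prod_X_sub_C _)] at hp
  have heval : p.eval t = (p.roots.map (t - ·)).prod * q.eval t := by
    conv_lhs => rw [← hpq]
    simp [eval_multiset_prod]
  rw [heval, ← mul_assoc]
  exact mul_pos (Multiset.neg_one_pow_countP_lt_mul_prod_pos ht) hqpos

theorem neg_one_pow_countP_add_card_mul_eval_pos {p : ℝ[X]} (hp : 0 < p.leadingCoeff) {t : ℝ}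
    (ht : t ∉ p.roots) :
    0 < (-1) ^ (p.roots.countP (· < t) + Multiset.card p.roots) * p.eval t := by
  have := p.roots.card_eq_countP_lt_add_countP_le t
  have := p.roots.countP_le_eq_count_add_countP_lt t
  rw [neg_one_pow_eq_pow_mod_two,
    show (p.roots.countP (· < t) + Multiset.card p.roots) % 2 = p.roots.countP (t < ·) % 2 by
      rw [Multiset.count_eq_zero.2 ht] at *; omega,
    ← neg_one_pow_eq_pow_mod_two]
  exact neg_one_pow_countP_lt_mul_eval_pos hp ht

theorem leadingCoeff_add_pos {g h : ℝ[X]} (hg : 0 < g.leadingCoeff) (hh : 0 < h.leadingCoeff) :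
    0 < (g + h).leadingCoeff := by
  rcases lt_trichotomy g.degree h.degree with hlt | heq | hgt
  · rwa [leadingCoeff_add_of_degree_lt hlt]
  · rw [leadingCoeff_add_of_degree_eq heq (add_pos hg hh).ne']
    exact add_pos hg hh
  · rwa [leadingCoeff_add_of_degree_lt' hgt]

end Polynomial

def RootsInterlace (f g : ℝ[X]) : Prop :=
  ∀ t : ℝ, f.roots.countP (t ≤ ·) ≤ g.roots.countP (t ≤ ·) ∧
    g.roots.countP (t ≤ ·) ≤ f.roots.countP (t ≤ ·) + 1

theorem RealRooted.countP_le_eq_natDegree {p : ℝ[X]} (hp : RealRooted p) {t : ℝ}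
    (ht : ∀ x ∈ p.roots, t ≤ x) : p.roots.countP (t ≤ ·) = p.natDegree :=
  (Multiset.countP_eq_card.2 ht).trans hp

namespace RootsInterlace

variable {f g : ℝ[X]}

theorem countP_lt_le (hfg : RootsInterlace f g) (t : ℝ) :
    g.roots.countP (t < ·) ≤ f.roots.countP (t < ·) + 1 :=
  Multiset.countP_lt_le_of_forall_countP_le (fun t => (hfg t).2) t

theorem count_le (hfg : RootsInterlace f g) (a : ℝ) :
    f.roots.count a ≤ g.roots.count a + 1 := by
  have := (hfg a).1
  have := hfg.countP_lt_le a
  have := f.roots.countP_le_eq_count_add_countP_lt a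
  have := g.roots.countP_le_eq_count_add_countP_lt a
  omega

theorem roots_sub_dedup_le (hfg : RootsInterlace f g) : f.roots - f.roots.dedup ≤ g.roots := by
  classical
  refine Multiset.le_iff_count.2 fun a => ?_
  rw [Multiset.count_sub, Multiset.count_dedup]
  have := hfg.count_le a
  split_ifs with ha
  · omega
  · simp [Multiset.count_eq_zero.2 ha]

theorem natDegree_eq_or (hfg : RootsInterlace f g) (hf : RealRooted f) (hg : RealRooted g) :
    g.natDegree = f.natDegree ∨ g.natDegree = f.natDegree + 1 := by
  obtain ⟨t, ht⟩ := (f.roots + g.roots).toFinset.bddBelow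
  have := hfg t
  rw [hf.countP_le_eq_natDegree fun x hx => ht (by simp [hx]),
    hg.countP_le_eq_natDegree fun x hx => ht (by simp [hx])] at this
  omega

theorem sign_eval_of_count_eq_one (hfg : RootsInterlace f g) (hg : 0 < g.leadingCoeff) {u : ℝ}
    (hu : f.roots.count u = 1) : 0 ≤ (-1) ^ f.roots.countP (u ≤ ·) * g.eval u := by
  by_cases hgu : g.IsRoot u
  · rw [hgu.eq_zero, mul_zero]
  have hcount : g.roots.count u = 0 :=
    Multiset.count_eq_zero.2 fun h => hgu (isRoot_of_mem_roots h)
  have := (hfg u).1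
  have := hfg.countP_lt_le u
  have := f.roots.countP_le_eq_count_add_countP_lt u
  have := g.roots.countP_le_eq_count_add_countP_lt u
  rw [show f.roots.countP (u ≤ ·) = g.roots.countP (u < ·) by omega]
  exact (neg_one_pow_countP_lt_mul_eval_pos hg fun h => hgu (isRoot_of_mem_roots h)).le

end RootsInterlace

theorem countP_roots_le_of_sign {f p : ℝ[X]} (hnd : f.roots.Nodup) (hp : 0 < p.leadingCoeff)
    (hsign : ∀ u ∈ f.roots, 0 ≤ (-1) ^ f.roots.countP (u ≤ ·) * p.eval u) (t : ℝ) :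
    f.roots.countP (t ≤ ·) ≤ p.roots.countP (t ≤ ·) :=
  Multiset.countP_le_countP_add_of_sign (fun _ => neg_one_pow_countP_lt_mul_eval_pos hp) 0 hnd
    (by simpa using hsign) t

theorem countP_roots_le_add_one_of_sign {f p : ℝ[X]} (hf : RealRooted f) (hnd : f.roots.Nodup)
    (hp : 0 < p.leadingCoeff) (hdeg : p.natDegree ≤ f.natDegree + 1)
    (hsign : ∀ u ∈ f.roots, 0 ≤ (-1) ^ f.roots.countP (u ≤ ·) * p.eval u) (t : ℝ) :
    p.roots.countP (t ≤ ·) ≤ f.roots.countP (t ≤ ·) + 1 := by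
  -- This is `countP_le_countP_add_of_sign` in `ℝᵒᵈ`, where `(-1) ^ #roots * p` has the
  -- sign of `(-1)` to the number of roots below a non-root.
  have hφ : ∀ s ∉ p.roots.map OrderDual.toDual,
      0 < (-1) ^ (p.roots.map OrderDual.toDual).countP (s < ·) *
        ((-1) ^ Multiset.card p.roots * p.eval (OrderDual.ofDual s)) := by
    intro s hs
    obtain ⟨t, rfl⟩ := OrderDual.toDual.surjective s
    simp only [Multiset.countP_map, ← Multiset.countP_eq_card_filter, OrderDual.toDual_lt_toDual,
      OrderDual.ofDual_toDual]
    rw [← mul_assoc, ← pow_add]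
    exact neg_one_pow_countP_add_card_mul_eval_pos hp (by simpa using hs)
  have hsign' : ∀ u ∈ f.roots.map OrderDual.toDual,
      0 ≤ (-1) ^ (f.natDegree + 1 - Multiset.card p.roots +
          (f.roots.map OrderDual.toDual).countP (u ≤ ·)) *
        ((-1) ^ Multiset.card p.roots * p.eval (OrderDual.ofDual u)) := by
    intro u' hu'
    obtain ⟨u, hu, rfl⟩ := Multiset.mem_map.1 hu'
    simp only [Multiset.countP_map, ← Multiset.countP_eq_card_filter, OrderDual.toDual_le_toDual,
      OrderDual.ofDual_toDual]
    have := f.roots.card_eq_countP_add_countP (· ≤ u)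
    simp only [not_le] at this
    have := f.roots.countP_le_eq_count_add_countP_lt u
    have := Multiset.count_eq_one_of_mem hnd hu
    have := p.card_roots'
    rw [← mul_assoc, ← pow_add, neg_one_pow_eq_pow_mod_two,
      show (f.natDegree + 1 - Multiset.card p.roots + f.roots.countP (· ≤ u) +
          Multiset.card p.roots) % 2 = f.roots.countP (u ≤ ·) % 2 by
        unfold RealRooted at hf; omega,
      ← neg_one_pow_eq_pow_mod_two]
    exact hsign u hu
  have hdual := Multiset.countP_lt_le_of_forall_countP_le
    (Multiset.countP_le_countP_add_of_sign hφ _ (hnd.map OrderDual.toDual.injective) hsign')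
    (OrderDual.toDual t)
  simp only [Multiset.countP_map, ← Multiset.countP_eq_card_filter,
    OrderDual.toDual_lt_toDual] at hdual
  have := p.roots.card_eq_countP_lt_add_countP_le t
  have := f.roots.card_eq_countP_lt_add_countP_le t
  have := p.card_roots'
  unfold RealRooted at hf
  omega

theorem realRooted_of_sign {f p : ℝ[X]} (hf : RealRooted f) (hnd : f.roots.Nodup)
    (hp : 0 < p.leadingCoeff) (hdeg : p.natDegree ≤ f.natDegree + 1)
    (hsign : ∀ u ∈ f.roots, 0 ≤ (-1) ^ f.roots.countP (u ≤ ·) * p.eval u) :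
    RealRooted p := by
  obtain ⟨t, ht⟩ := f.roots.toFinset.bddBelow
  have := countP_roots_le_of_sign hnd hp hsign t
  rw [hf.countP_le_eq_natDegree fun x hx => ht (by simpa using hx)] at this
  have := p.roots.countP_le_card (t ≤ ·)
  have := p.card_roots'
  obtain ⟨k, hk⟩ := p.even_natDegree_sub_card_roots
  unfold RealRooted
  omega

section LinearFactors

variable (R : Multiset ℝ) {q : ℝ[X]}

theorem roots_multiset_prod_X_sub_C_mul (hq : q ≠ 0) :
    ((R.map fun a => X - C a).prod * q).roots = R + q.roots := by
  rw [roots_mul (mul_ne_zero (monic_multiset_prod_X_sub_C R).ne_zero hq),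
    roots_multiset_prod_X_sub_C]

theorem realRooted_multiset_prod_X_sub_C_mul_iff (hq : q ≠ 0) :
    RealRooted ((R.map fun a => X - C a).prod * q) ↔ RealRooted q := by
  unfold RealRooted
  rw [roots_multiset_prod_X_sub_C_mul R hq,
    natDegree_mul (monic_multiset_prod_X_sub_C R).ne_zero hq,
    natDegree_multiset_prod_X_sub_C_eq_card, Multiset.card_add]
  omega

theorem rootsInterlace_multiset_prod_X_sub_C_mul_iff {f g : ℝ[X]} (hf : f ≠ 0) (hg : g ≠ 0) :
    RootsInterlace ((R.map fun a => X - C a).prod * f) ((R.map fun a => X - C a).prod * g) ↔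
      RootsInterlace f g := by
  simp only [RootsInterlace, roots_multiset_prod_X_sub_C_mul R hf,
    roots_multiset_prod_X_sub_C_mul R hg, Multiset.countP_add]
  exact forall_congr' fun t => by omega

end LinearFactors

namespace RootsInterlace

variable {f g h : ℝ[X]}

theorem add_of_nodup (hf : RealRooted f) (hnd : f.roots.Nodup) (hg : RealRooted g)
    (hh : RealRooted h) (hgl : 0 < g.leadingCoeff) (hhl : 0 < h.leadingCoeff)
    (hfg : RootsInterlace f g) (hfh : RootsInterlace f h) :
    RealRooted (g + h) ∧ RootsInterlace f (g + h) := by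
  have hpos := leadingCoeff_add_pos hgl hhl
  have hdeg : (g + h).natDegree ≤ f.natDegree + 1 := by
    have := hfg.natDegree_eq_or hf hg
    have := hfh.natDegree_eq_or hf hh
    exact (natDegree_add_le g h).trans (max_le (by omega) (by omega))
  have hsign : ∀ u ∈ f.roots, 0 ≤ (-1) ^ f.roots.countP (u ≤ ·) * (g + h).eval u := by
    intro u hu
    have hu := Multiset.count_eq_one_of_mem hnd hu
    rw [eval_add, mul_add]
    exact add_nonneg (hfg.sign_eval_of_count_eq_one hgl hu) (hfh.sign_eval_of_count_eq_one hhl hu)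
  exact ⟨realRooted_of_sign hf hnd hpos hdeg hsign, fun t =>
    ⟨countP_roots_le_of_sign hnd hpos hsign t,
      countP_roots_le_add_one_of_sign hf hnd hpos hdeg hsign t⟩⟩

theorem add (hf : RealRooted f) (hg : RealRooted g) (hh : RealRooted h)
    (hgl : 0 < g.leadingCoeff) (hhl : 0 < h.leadingCoeff) (hfg : RootsInterlace f g)
    (hfh : RootsInterlace f h) : RealRooted (g + h) ∧ RootsInterlace f (g + h) := by
  rcases eq_or_ne f 0 with rfl | hf0
  · exact add_of_nodup hf (by simp) hg hh hgl hhl hfg hfh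
  have hg0 : g ≠ 0 := by rintro rfl; simp at hgl
  have hh0 : h ≠ 0 := by rintro rfl; simp at hhl
  obtain ⟨R, hRf, hRg, hRh, hRnd⟩ : ∃ R, R ≤ f.roots ∧ R ≤ g.roots ∧ R ≤ h.roots ∧
      (f.roots - R).Nodup :=
    ⟨f.roots - f.roots.dedup, tsub_le_self, hfg.roots_sub_dedup_le, hfh.roots_sub_dedup_le, by
      rw [tsub_tsub_cancel_of_le (Multiset.dedup_le _)]; exact Multiset.nodup_dedup _⟩
  obtain ⟨f₀, rfl⟩ := (Multiset.prod_X_sub_C_dvd_iff_le_roots hf0 R).2 hRf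
  obtain ⟨g₀, rfl⟩ := (Multiset.prod_X_sub_C_dvd_iff_le_roots hg0 R).2 hRg
  obtain ⟨h₀, rfl⟩ := (Multiset.prod_X_sub_C_dvd_iff_le_roots hh0 R).2 hRh
  have hf₀ : f₀ ≠ 0 := right_ne_zero_of_mul hf0
  have hg₀ : g₀ ≠ 0 := right_ne_zero_of_mul hg0
  have hh₀ : h₀ ≠ 0 := right_ne_zero_of_mul hh0
  have hgh₀ : g₀ + h₀ ≠ 0 := by
    intro h0
    simpa [← mul_add, h0] using leadingCoeff_add_pos hgl hhl
  rw [roots_multiset_prod_X_sub_C_mul R hf₀, add_tsub_cancel_left] at hRnd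
  rw [realRooted_multiset_prod_X_sub_C_mul_iff R hf₀] at hf
  rw [realRooted_multiset_prod_X_sub_C_mul_iff R hg₀] at hg
  rw [realRooted_multiset_prod_X_sub_C_mul_iff R hh₀] at hh
  rw [leadingCoeff_monic_mul (monic_multiset_prod_X_sub_C R)] at hgl hhl
  rw [rootsInterlace_multiset_prod_X_sub_C_mul_iff R hf₀ hg₀] at hfg
  rw [rootsInterlace_multiset_prod_X_sub_C_mul_iff R hf₀ hh₀] at hfh
  rw [← mul_add, realRooted_multiset_prod_X_sub_C_mul_iff R hgh₀,
    rootsInterlace_multiset_prod_X_sub_C_mul_iff R hf₀ hgh₀]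
  exact add_of_nodup hf hRnd hg hh hgl hhl hfg hfh

end RootsInterlace

theorem ascRoots_sortedLE (p : ℝ[X]) : (ascRoots p).SortedLE :=
  (Multiset.pairwise_sort _ _).sortedLE

theorem countP_ascRoots (p : ℝ[X]) (P : ℝ → Prop) [DecidablePred P] :
    (ascRoots p).countP (P ·) = p.roots.countP P := by
  rw [← Multiset.coe_countP, ascRoots, Multiset.sort_eq]

theorem RealRooted.length_ascRoots {p : ℝ[X]} (hp : RealRooted p) :
    (ascRoots p).length = p.natDegree :=
  (Multiset.length_sort _).trans hp

theorem RealRooted.forall_ascRoots_le_iff {p q : ℝ[X]} (hp : RealRooted p) (hq : RealRooted q)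
    {k : ℕ} (hdeg : q.natDegree ≤ p.natDegree + k) :
    (∀ i, i < p.natDegree → i + k < q.natDegree →
        (ascRoots p)[i]! ≤ (ascRoots q)[i + k]!) ↔
      ∀ t, p.roots.countP (t ≤ ·) ≤
        q.roots.countP (t ≤ ·) + (p.natDegree + k - q.natDegree) := by
  simpa only [hp.length_ascRoots, hq.length_ascRoots, countP_ascRoots] using
    (ascRoots_sortedLE p).forall_getElem!_le_iff (ascRoots_sortedLE q) (k := k)
      (by rwa [hp.length_ascRoots, hq.length_ascRoots])

theorem interlaces_iff {f g : ℝ[X]} :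
    Interlaces f g ↔ RealRooted f ∧ RealRooted g ∧ RootsInterlace f g := by
  constructor
  · rintro ⟨hg, hf, ⟨hd, h1, h2⟩ | ⟨hd, h12⟩⟩
    · have A := (hf.forall_ascRoots_le_iff hg (k := 0) (by omega)).1 fun i hi _ => h1 i (by omega)
      have B := (hg.forall_ascRoots_le_iff hf (k := 1) (by omega)).1 fun i _ hi => h2 i (by omega)
      exact ⟨hf, hg, fun t => ⟨by have := A t; omega, by have := B t; omega⟩⟩
    · have A := (hg.forall_ascRoots_le_iff hf (k := 0) (by omega)).1 fun i _ hi => (h12 i hi).1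
      have B := (hf.forall_ascRoots_le_iff hg (k := 1) (by omega)).1 fun i hi _ => (h12 i hi).2
      exact ⟨hf, hg, fun t => ⟨by have := B t; omega, by have := A t; omega⟩⟩
  · rintro ⟨hf, hg, hfg⟩
    refine ⟨hg, hf, ?_⟩
    rcases hfg.natDegree_eq_or hf hg with hd | hd
    · refine Or.inl ⟨hd, fun i hi => ?_, fun i hi => ?_⟩
      · exact (hf.forall_ascRoots_le_iff hg (k := 0) (by omega)).2
          (fun t => by have := (hfg t).1; omega) i (by omega) (by omega)
      · exact (hg.forall_ascRoots_le_iff hf (k := 1) (by omega)).2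
          (fun t => by have := (hfg t).2; omega) i (by omega) (by omega)
    · refine Or.inr ⟨hd, fun i hi => ⟨?_, ?_⟩⟩
      · exact (hg.forall_ascRoots_le_iff hf (k := 0) (by omega)).2
          (fun t => by have := (hfg t).2; omega) i (by omega) hi
      · exact (hf.forall_ascRoots_le_iff hg (k := 1) (by omega)).2
          (fun t => by have := (hfg t).1; omega) i hi (by omega)

theorem stmt0_general (f g h : Polynomial ℝ)
    (hg' : ∀ i, 0 ≤ g.coeff i) (hh' : ∀ i, 0 ≤ h.coeff i)
    (hfg : Interlaces f g) (hfh : Interlaces f h) :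
    Interlaces f (g + h) := by
  rcases eq_or_ne g 0 with rfl | hg0
  · rwa [zero_add]
  rcases eq_or_ne h 0 with rfl | hh0
  · rwa [add_zero]
  obtain ⟨hf, hg, hfg⟩ := interlaces_iff.1 hfg
  obtain ⟨-, hh, hfh⟩ := interlaces_iff.1 hfh
  obtain ⟨hgh, hfgh⟩ := hfg.add hf hg hh ((hg' _).lt_of_ne (leadingCoeff_ne_zero.2 hg0).symm)
    ((hh' _).lt_of_ne (leadingCoeff_ne_zero.2 hh0).symm) hfh
  exact interlaces_iff.2 ⟨hf, hgh, hfgh⟩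

theorem stmt0 (f g h : Polynomial ℝ)
    (hf : RealRooted f) (hg : RealRooted g) (hh : RealRooted h)
    (hf' : ∀ i, 0 ≤ f.coeff i) (hg' : ∀ i, 0 ≤ g.coeff i) (hh' : ∀ i, 0 ≤ h.coeff i)
    (hfg : Interlaces f g) (hfh : Interlaces f h) :
    Interlaces f (g + h) :=
  stmt0_general f g h hg' hh' hfg hfh
end

section
/- If f and g are real-rooted polynomials with nonnegative coefficients such that f interlaces g, then (1+z)f + g interlaces zf + g; that is, the matrix [[1+z, 1],[z, 1]] preserves interlacing pairs. -/
open Polynomial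

section InterlacingProof

open Multiset

/-- number of elements of `s` that are `> x` -/
noncomputable def rcount (s : Multiset ℝ) (x : ℝ) : ℕ := (s.filter (x < ·)).card

noncomputable def icount (n : ℕ) (v : ℕ → ℝ) (x : ℝ) : ℕ :=
  ((Finset.range n).filter (fun i => x < v i)).card

lemma rcount_add (s t : Multiset ℝ) (x : ℝ) :
    rcount (s + t) x = rcount s x + rcount t x := by
  simp [rcount, Multiset.filter_add]

lemma rcount_map_range (n : ℕ) (v : ℕ → ℝ) (x : ℝ) :
    rcount ((Multiset.range n).map v) x = icount n v x := by
  simp only [rcount, icount, Multiset.filter_map, Multiset.card_map]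
  rw [Finset.card_filter]
  simp [Finset.card, Finset.range]

lemma list_eq_map_range' {α : Type*} [Inhabited α] (L : List α) :
    (List.range L.length).map (fun i => L[i]!) = L := by
  induction L with
  | nil => simp
  | cons a tl ih =>
      show (List.range (tl.length + 1)).map (fun i => (a :: tl)[i]!) = a :: tl
      rw [List.range_succ_eq_map, List.map_cons, List.map_map]
      congr 1

lemma list_eq_map_range {α : Type*} [Inhabited α] (L : List α) :
    (L : Multiset α) = (Multiset.range L.length).map (fun i => L[i]!) := by
  conv_lhs => rw [← list_eq_map_range' L]
  simp [Multiset.range]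

lemma icount_mono (n : ℕ) (v w : ℕ → ℝ) (x : ℝ) (h : ∀ i, i < n → (x < v i → x < w i)) :
    icount n v x ≤ icount n w x := by
  apply Finset.card_le_card
  intro j hj
  simp only [Finset.mem_filter, Finset.mem_range] at *
  exact ⟨hj.1, h j hj.1 hj.2⟩

lemma icount_le_inj (m n : ℕ) (v w : ℕ → ℝ) (x : ℝ)
    (h : ∀ i, i < m → x < v i → i + 1 < n ∧ x < w (i + 1)) :
    icount m v x ≤ icount n w x := by
  apply Finset.card_le_card_of_injOn (fun i => i + 1)
  · intro j hj
    simp only [Finset.mem_coe, Finset.mem_filter, Finset.mem_range] at *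
    exact ⟨(h j hj.1 hj.2).1, (h j hj.1 hj.2).2⟩
  · intro a _ b _ hab
    simp only [add_left_inj] at hab
    exact hab

lemma icount_le_same_succ (n : ℕ) (v w : ℕ → ℝ) (x : ℝ)
    (h : ∀ i, i < n → x < v i → x < w i) :
    icount (n + 1) v x ≤ icount n w x + 1 := by
  have hsub : (Finset.range (n+1)).filter (fun i => x < v i) ⊆
      insert n ((Finset.range n).filter (fun i => x < w i)) := by
    intro j hj
    simp only [Finset.mem_filter, Finset.mem_range, Finset.mem_insert] at *
    rcases Nat.lt_succ_iff_lt_or_eq.mp hj.1 with h' | h'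
    · exact Or.inr ⟨h', h j h' hj.2⟩
    · exact Or.inl h'
  calc icount (n+1) v x ≤ _ := Finset.card_le_card hsub
    _ ≤ ((Finset.range n).filter (fun i => x < w i)).card + 1 := Finset.card_insert_le _ _
    _ = icount n w x + 1 := rfl

lemma icount_le_up (m n : ℕ) (v w : ℕ → ℝ) (x : ℝ)
    (h : ∀ i, i + 1 < m → x < v i → i + 1 < n ∧ x < w (i + 1)) :
    icount m v x ≤ icount n w x + 1 := by
  set S := (Finset.range m).filter (fun i => x < v i) with hS
  have h1 : S ⊆ insert (m - 1) (S.filter (fun j => j + 1 < m)) := by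
    intro j hj
    simp only [hS, Finset.mem_filter, Finset.mem_range, Finset.mem_insert] at *
    by_cases hjm : j + 1 < m
    · exact Or.inr ⟨⟨hj.1, hj.2⟩, hjm⟩
    · omega
  have h2 : (S.filter (fun j => j + 1 < m)).card ≤ icount n w x := by
    apply Finset.card_le_card_of_injOn (fun i => i + 1)
    · intro j hj
      simp only [hS, Finset.mem_coe, Finset.mem_filter, Finset.mem_range] at *
      exact ⟨(h j hj.2 hj.1.2).1, (h j hj.2 hj.1.2).2⟩
    · intro a _ b _ hab
      simp only [add_left_inj] at hab
      exact hab
  calc S.card ≤ _ := Finset.card_le_card h1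
    _ ≤ (S.filter (fun j => j + 1 < m)).card + 1 := Finset.card_insert_le _ _
    _ ≤ icount n w x + 1 := by omega

lemma icount_le_down (m n : ℕ) (v w : ℕ → ℝ) (x : ℝ)
    (h : ∀ i, i + 1 < m → x < v (i + 1) → i < n ∧ x < w i) :
    icount m v x ≤ icount n w x + 1 := by
  set S := (Finset.range m).filter (fun i => x < v i) with hS
  have h1 : S ⊆ insert 0 (S.filter (fun j => 0 < j)) := by
    intro j hj
    by_cases hj0 : 0 < j
    · exact Finset.mem_insert_of_mem (Finset.mem_filter.mpr ⟨hj, hj0⟩)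
    · simp only [Finset.mem_insert]; omega
  have h2 : (S.filter (fun j => 0 < j)).card ≤ icount n w x := by
    apply Finset.card_le_card_of_injOn (fun i => i - 1)
    · intro j hj
      simp only [hS, Finset.mem_coe, Finset.mem_filter, Finset.mem_range] at *
      obtain ⟨⟨hjm, hxv⟩, hj0⟩ := hj
      obtain ⟨i, rfl⟩ : ∃ i, j = i + 1 := ⟨j - 1, by omega⟩
      simpa using ⟨(h i hjm hxv).1, (h i hjm hxv).2⟩
    · intro a ha b hb hab
      simp only [Finset.coe_filter, Set.mem_setOf_eq, Finset.mem_filter, Finset.mem_range,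
        hS] at ha hb
      have ha0 : 0 < a := ha.2
      have hb0 : 0 < b := hb.2
      have hab' : a - 1 = b - 1 := hab
      omega
  calc S.card ≤ _ := Finset.card_le_card h1
    _ ≤ (S.filter (fun j => 0 < j)).card + 1 := Finset.card_insert_le _ _
    _ ≤ icount n w x + 1 := by omega

lemma icount_le_card (n : ℕ) (v : ℕ → ℝ) (x : ℝ) : icount n v x ≤ n := by
  calc icount n v x ≤ (Finset.range n).card := Finset.card_le_card (Finset.filter_subset _ _)
    _ = n := Finset.card_range n

lemma icount_ge_of_sorted (L : List ℝ) (hs : L.Pairwise (· ≤ ·)) (i : ℕ) (hi : i < L.length)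
    (x : ℝ) (hx : x < L[i]!) : L.length ≤ icount L.length (fun j => L[j]!) x + i := by
  have hsub : Finset.Ico i L.length ⊆ (Finset.range L.length).filter (fun j => x < L[j]!) := by
    intro j hj
    simp only [Finset.mem_Ico, Finset.mem_filter, Finset.mem_range] at *
    refine ⟨hj.2, lt_of_lt_of_le hx ?_⟩
    rw [getElem!_pos L i hi, getElem!_pos L j hj.2]
    rcases eq_or_lt_of_le hj.1 with h' | h'
    · subst h'; rfl
    · exact hs.rel_get_of_lt (show (⟨i, hi⟩ : Fin L.length) < ⟨j, hj.2⟩ from h')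
  have := Finset.card_le_card hsub
  rw [Nat.card_Ico] at this
  have : L.length - i ≤ icount L.length (fun j => L[j]!) x := this
  omega

lemma icount_lt_of_sorted (L : List ℝ) (hs : L.Pairwise (· ≤ ·)) (i : ℕ) (hi : i < L.length)
    (x : ℝ) (hx : L[i]! ≤ x) : icount L.length (fun j => L[j]!) x + i + 1 ≤ L.length := by
  have hsub : (Finset.range L.length).filter (fun j => x < L[j]!) ⊆ Finset.Ico (i+1) L.length := by
    intro j hj
    simp only [Finset.mem_Ico, Finset.mem_filter, Finset.mem_range] at *
    refine ⟨?_, hj.1⟩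
    by_contra h'
    have hji : j ≤ i := by omega
    have : L[j]! ≤ L[i]! := by
      rw [getElem!_pos L i hi, getElem!_pos L j hj.1]
      rcases eq_or_lt_of_le hji with h'' | h''
      · subst h''; rfl
      · exact hs.rel_get_of_lt (show (⟨j, hj.1⟩ : Fin L.length) < ⟨i, hi⟩ from h'')
    linarith [hj.2]
  have h3 : icount L.length (fun j => L[j]!) x ≤ L.length - (i+1) := by
    have := Finset.card_le_card hsub
    rw [Nat.card_Ico] at this
    exact this
  omega

lemma eval_sign (p : Polynomial ℝ) (hp : p.roots.card = p.natDegree) (hl : 0 < p.leadingCoeff)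
    (x : ℝ) (hx : x ∉ p.roots) : 0 < (-1 : ℝ) ^ (rcount p.roots x) * p.eval x := by
  have hfact := C_leadingCoeff_mul_prod_multiset_X_sub_C hp
  have heval : p.eval x = p.leadingCoeff * ((p.roots.map (fun a => x - a)).prod) := by
    conv_lhs => rw [← hfact]
    rw [eval_mul, eval_C, eval_multiset_prod, Multiset.map_map]
    congr 2
    apply Multiset.map_congr rfl
    intro a _
    simp
  set s := p.roots with hs
  have hsplit : s = s.filter (x < ·) + s.filter (fun a => ¬ x < a) := (filter_add_not _ s).symm
  have hprod : (s.map (fun a => x - a)).prod =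
      ((s.filter (x < ·)).map (fun a => x - a)).prod *
        ((s.filter (fun a => ¬ x < a)).map (fun a => x - a)).prod := by
    conv_lhs => rw [hsplit]
    rw [Multiset.map_add, Multiset.prod_add]
  have hB : 0 < ((s.filter (fun a => ¬ x < a)).map (fun a => x - a)).prod := by
    apply Multiset.prod_pos
    intro b hb
    obtain ⟨a, ha, rfl⟩ := Multiset.mem_map.mp hb
    have h1 := (Multiset.mem_filter.mp ha).2
    have h2 : a ∈ s := (Multiset.mem_filter.mp ha).1
    have : a ≠ x := by rintro rfl; exact hx h2
    simp only [not_lt] at h1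
    have : a < x := lt_of_le_of_ne h1 this
    linarith
  have hA : 0 < (-1 : ℝ) ^ (rcount s x) * ((s.filter (x < ·)).map (fun a => x - a)).prod := by
    have hmap : ((s.filter (x < ·)).map (fun a => x - a)) =
        ((s.filter (x < ·)).map (fun a => a - x)).map Neg.neg := by
      rw [Multiset.map_map]
      apply Multiset.map_congr rfl
      intro a _
      simp
    rw [hmap, Multiset.prod_map_neg, Multiset.card_map]
    have hcard : rcount s x = Multiset.card (s.filter (x < ·)) := rfl
    rw [← hcard, ← mul_assoc, ← pow_add]
    have heven : (-1 : ℝ) ^ (rcount s x + rcount s x) = 1 :=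
      Even.neg_one_pow ⟨rcount s x, rfl⟩
    rw [heven, one_mul]
    apply Multiset.prod_pos
    intro b hb
    obtain ⟨a, ha, rfl⟩ := Multiset.mem_map.mp hb
    have h1 := (Multiset.mem_filter.mp ha).2
    linarith
  rw [heval, hprod]
  have : (-1 : ℝ) ^ (rcount s x) * (p.leadingCoeff *
      (((s.filter (x < ·)).map (fun a => x - a)).prod *
        ((s.filter (fun a => ¬ x < a)).map (fun a => x - a)).prod)) =
      p.leadingCoeff * (((-1 : ℝ) ^ (rcount s x) *
        ((s.filter (x < ·)).map (fun a => x - a)).prod) *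
        ((s.filter (fun a => ¬ x < a)).map (fun a => x - a)).prod) := by ring
  rw [this]
  positivity

lemma exists_pos_tail (p : Polynomial ℝ) (hdeg : 0 < p.natDegree) (hl : 0 < p.leadingCoeff) :
    ∃ B : ℝ, ∀ x, B ≤ x → 0 < p.eval x := by
  have h := p.tendsto_atTop_of_leadingCoeff_nonneg (natDegree_pos_iff_degree_pos.mp hdeg) hl.le
  have h2 := h.eventually_gt_atTop 0
  obtain ⟨B, hB⟩ := Filter.eventually_atTop.mp h2
  exact ⟨B, fun x hx => hB x hx⟩

lemma exists_neg_tail (p : Polynomial ℝ) (hdeg : 0 < p.natDegree) (hl : 0 < p.leadingCoeff) :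
    ∃ A : ℝ, ∀ x, x ≤ A → 0 < (-1 : ℝ) ^ p.natDegree * p.eval x := by
  set n := p.natDegree with hn
  have hp0 : p ≠ 0 := leadingCoeff_ne_zero.mp (ne_of_gt hl)
  set q := C ((-1 : ℝ) ^ n) * p.comp (-X) with hq
  have hnegX : (-X : Polynomial ℝ).natDegree = 1 := by simp
  have hcompdeg : (p.comp (-X)).natDegree = n := by
    rw [natDegree_comp, hnegX, mul_one]
  have hcomp0 : p.comp (-X) ≠ 0 := by
    intro h
    have : (p.comp (-X)).natDegree = 0 := by rw [h]; simp
    rw [hcompdeg] at this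
    omega
  have hqdeg : q.natDegree = n := by
    rw [hq, natDegree_C_mul (by positivity : ((-1:ℝ)^n) ≠ 0), hcompdeg]
  have hqlead : q.leadingCoeff = p.leadingCoeff := by
    rw [hq, leadingCoeff_mul, leadingCoeff_C, leadingCoeff_comp (by rw [hnegX]; omega)]
    have : (-X : Polynomial ℝ).leadingCoeff = -1 := by
      simp
    rw [this, ← hn]
    have h1 : ((-1 : ℝ) ^ n) * ((-1 : ℝ) ^ n) = 1 := by
      rw [← pow_add]; exact Even.neg_one_pow ⟨n, rfl⟩
    calc (-1 : ℝ) ^ n * (p.leadingCoeff * (-1) ^ n)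
        = ((-1 : ℝ) ^ n * (-1) ^ n) * p.leadingCoeff := by ring
      _ = p.leadingCoeff := by rw [h1, one_mul]
  obtain ⟨B, hB⟩ := exists_pos_tail q (by omega) (by rw [hqlead]; exact hl)
  refine ⟨-B, fun x hx => ?_⟩
  have := hB (-x) (by linarith)
  have heq : q.eval (-x) = (-1 : ℝ) ^ n * p.eval x := by
    rw [hq, eval_mul, eval_C, eval_comp]
    simp
  rw [heq] at this
  exact this

lemma ivt_root (p : Polynomial ℝ) (a b : ℝ) (hab : a < b) (hsign : p.eval a * p.eval b < 0) :
    ∃ x, x ∈ Set.Ioo a b ∧ p.eval x = 0 := by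
  have hcont : ContinuousOn (fun x => p.eval x) (Set.Icc a b) := p.continuous.continuousOn
  rcases mul_neg_iff.mp hsign with ⟨ha, hb⟩ | ⟨ha, hb⟩
  · obtain ⟨x, hx, hfx⟩ := intermediate_value_Ioo' hab.le hcont (Set.mem_Ioo.mpr ⟨hb, ha⟩)
    exact ⟨x, hx, hfx⟩
  · obtain ⟨x, hx, hfx⟩ := intermediate_value_Ioo hab.le hcont (Set.mem_Ioo.mpr ⟨ha, hb⟩)
    exact ⟨x, hx, hfx⟩

lemma exists_gap (s : Multiset ℝ) (u : ℝ) : ∃ x, x < u ∧ ∀ r ∈ s, r < u → r ≤ x := by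
  induction s using Multiset.induction with
  | empty => exact ⟨u - 1, by linarith, by simp⟩
  | cons a t ih =>
      obtain ⟨x, hx, hx2⟩ := ih
      by_cases ha : a < u
      · refine ⟨max x a, max_lt hx ha, fun r hr hru => ?_⟩
        rcases Multiset.mem_cons.mp hr with h | h
        · subst h; exact le_max_right _ _
        · exact le_trans (hx2 r h hru) (le_max_left _ _)
      · refine ⟨x, hx, fun r hr hru => ?_⟩
        rcases Multiset.mem_cons.mp hr with h | h
        · subst h; exact absurd hru ha
        · exact hx2 r h hru

lemma main_roots (n : ℕ) (u : ℕ → ℝ)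
    (hu : ∀ i, i + 1 < n → u (i + 1) < u i)
    (P : Polynomial ℝ) (hPdeg : P.natDegree = n + 1) (hPl : 0 < P.leadingCoeff)
    (hsign : ∀ i, i < n → 0 < (-1 : ℝ) ^ (i + 1) * P.eval (u i)) :
    ∃ α : ℕ → ℝ,
      P.roots = (Multiset.range (n + 1)).map α ∧
      (∀ i, i < n → u i < α i) ∧
      (∀ i, 1 ≤ i → i ≤ n → α i < u (i - 1)) := by
  have hP0 : P ≠ 0 := leadingCoeff_ne_zero.mp (ne_of_gt hPl)
  -- u is strictly decreasing
  have hmono' : ∀ i k, i + k < n → u (i + k) ≤ u i := by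
    intro i k
    induction k with
    | zero => simp
    | succ k ih =>
        intro h
        have h1 : i + k < n := by omega
        have h2 : u (i + (k + 1)) < u (i + k) := hu (i + k) (by omega)
        exact le_of_lt (lt_of_lt_of_le h2 (ih h1))
  have hmono : ∀ i j, i ≤ j → j < n → u j ≤ u i := by
    intro i j hij hj
    have : u (i + (j - i)) ≤ u i := hmono' i (j - i) (by omega)
    convert this using 2
    omega
  obtain ⟨B0, hB0⟩ := exists_pos_tail P (by omega) hPl
  obtain ⟨A0, hA0⟩ := exists_neg_tail P (by omega) hPl
  set B := max B0 (u 0 + 1) with hB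
  set A := min A0 (min (u (n - 1) - 1) (B - 1)) with hA
  have hBpos : 0 < P.eval B := hB0 B (le_max_left _ _)
  have hBu0 : u 0 < B := by
    have := le_max_right B0 (u 0 + 1)
    linarith
  have hAneg : 0 < (-1 : ℝ) ^ (n + 1) * P.eval A := by
    rw [← hPdeg]
    exact hA0 A (min_le_left _ _)
  have hAu : A < u (n - 1) := by
    have h1 := min_le_right A0 (min (u (n - 1) - 1) (B - 1))
    have h2 := min_le_left (u (n - 1) - 1) (B - 1)
    rw [hA]; linarith [le_trans h1 h2]
  have hAB : A < B := by
    have h1 := min_le_right A0 (min (u (n - 1) - 1) (B - 1))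
    have h2 := min_le_right (u (n - 1) - 1) (B - 1)
    rw [hA]; linarith [le_trans h1 h2]
  set lo : ℕ → ℝ := fun i => if i < n then u i else A with hlo
  set hi : ℕ → ℝ := fun i => if i = 0 then B else u (i - 1) with hhi
  have hlosign : ∀ i, i ≤ n → 0 < (-1 : ℝ) ^ (i + 1) * P.eval (lo i) := by
    intro i hi'
    simp only [hlo]
    by_cases h : i < n
    · rw [if_pos h]
      exact hsign i h
    · have : i = n := by omega
      subst this
      rw [if_neg h]
      exact hAneg
  have hhisign : ∀ i, i ≤ n → 0 < (-1 : ℝ) ^ i * P.eval (hi i) := by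
    intro i hi'
    simp only [hhi]
    by_cases h : i = 0
    · subst h
      rw [if_pos rfl]
      simpa using hBpos
    · rw [if_neg h]
      have := hsign (i - 1) (by omega)
      have heq : i - 1 + 1 = i := by omega
      rw [heq] at this
      exact this
  have hlohi : ∀ i, i ≤ n → lo i < hi i := by
    intro i hin
    simp only [hlo, hhi]
    by_cases h0 : i = 0
    · subst h0
      rw [if_pos rfl]
      by_cases hn : 0 < n
      · rw [if_pos hn]; exact hBu0
      · rw [if_neg hn]; exact hAB
    · rw [if_neg h0]
      by_cases h : i < n
      · rw [if_pos h]
        have h2 := hu (i - 1) (by omega)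
        have heq : i - 1 + 1 = i := by omega
        rw [heq] at h2
        exact h2
      · rw [if_neg h]
        have heq : i - 1 = n - 1 := by omega
        rw [heq]
        exact hAu
  have hroot : ∀ i, ∃ x, i ≤ n → (x ∈ Set.Ioo (lo i) (hi i) ∧ P.eval x = 0) := by
    intro i
    by_cases hi' : i ≤ n
    · have h1 := hlosign i hi'
      have h2 := hhisign i hi'
      have hprod : P.eval (lo i) * P.eval (hi i) < 0 := by
        have he : ((-1 : ℝ) ^ i) * ((-1 : ℝ) ^ i) = 1 := by
          rw [← pow_add]; exact Even.neg_one_pow ⟨i, rfl⟩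
        have h1' : 0 < (-1 : ℝ) ^ i * ((-1) * P.eval (lo i)) := by
          have : (-1 : ℝ) ^ (i + 1) = (-1 : ℝ) ^ i * (-1) := by rw [pow_succ]
          rw [this] at h1
          linarith [h1]
        nlinarith [h1', h2, he]
      obtain ⟨x, hx1, hx2⟩ := ivt_root P (lo i) (hi i) (hlohi i hi') hprod
      exact ⟨x, fun _ => ⟨hx1, hx2⟩⟩
    · exact ⟨0, fun h => absurd h hi'⟩
  choose α hα using hroot
  have hαlo : ∀ i, i ≤ n → lo i < α i := fun i h => ((hα i h).1).1
  have hαhi : ∀ i, i ≤ n → α i < hi i := fun i h => ((hα i h).1).2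
  have hαroot : ∀ i, i ≤ n → P.eval (α i) = 0 := fun i h => (hα i h).2
  have hulo : ∀ i, i < n → u i < α i := by
    intro i h
    have h2 := hαlo i (by omega)
    simp only [hlo] at h2
    rw [if_pos h] at h2
    exact h2
  have hαhiu : ∀ i, 1 ≤ i → i ≤ n → α i < u (i - 1) := by
    intro i h1 h2
    have h3 := hαhi i h2
    simp only [hhi] at h3
    rw [if_neg (by omega : ¬ i = 0)] at h3
    exact h3
  have hord : ∀ i j, i < j → j ≤ n → α j < α i := by
    intro i j hij hj
    have h1 : α j < u (j - 1) := hαhiu j (by omega) hj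
    have h2 : u (j - 1) ≤ u i := hmono i (j - 1) (by omega) (by omega)
    have h3 : u i < α i := hulo i (by omega)
    linarith
  set T : Multiset ℝ := (Multiset.range (n + 1)).map α with hT
  have hTnodup : T.Nodup := by
    rw [hT]
    apply Multiset.Nodup.map_on _ (Multiset.nodup_range _)
    intro i hi1 j hj1 hij
    rw [Multiset.mem_range] at hi1 hj1
    by_contra hne
    rcases lt_or_gt_of_ne hne with h | h
    · have h2 := hord i j h (by omega)
      rw [hij] at h2; exact absurd h2 (lt_irrefl _)
    · have h2 := hord j i h (by omega)
      rw [hij] at h2; exact absurd h2 (lt_irrefl _)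
  have hTle : T ≤ P.roots := by
    rw [Multiset.le_iff_count]
    intro a
    by_cases ha : a ∈ T
    · have h1 : Multiset.count a T ≤ 1 := Multiset.nodup_iff_count_le_one.mp hTnodup a
      have h2 : 1 ≤ Multiset.count a P.roots := by
        rw [Multiset.one_le_count_iff_mem, mem_roots']
        obtain ⟨i, hi1, rfl⟩ := Multiset.mem_map.mp ha
        rw [Multiset.mem_range] at hi1
        exact ⟨hP0, hαroot i (by omega)⟩
      omega
    · simp [Multiset.count_eq_zero_of_notMem ha]
  have hcard : Multiset.card T = n + 1 := by rw [hT]; simp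
  have hTeq : T = P.roots := by
    apply Multiset.eq_of_le_of_card_le hTle
    rw [hcard]
    calc Multiset.card P.roots ≤ P.natDegree := P.card_roots'
      _ = n + 1 := hPdeg
  exact ⟨α, hTeq.symm, hulo, hαhiu⟩

lemma icount_eq_of (m i : ℕ) (v : ℕ → ℝ) (x : ℝ) (hi : i ≤ m)
    (h1 : ∀ j, j < i → x < v j) (h2 : ∀ j, i ≤ j → j < m → ¬ x < v j) :
    icount m v x = i := by
  have : (Finset.range m).filter (fun j => x < v j) = Finset.range i := by
    ext j
    simp only [Finset.mem_filter, Finset.mem_range]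
    constructor
    · rintro ⟨hjm, hxv⟩
      by_contra h
      exact h2 j (by omega) hjm hxv
    · intro hj
      exact ⟨by omega, h1 j hj⟩
  rw [icount, this, Finset.card_range]

lemma rcount_split (s : Multiset ℝ) {x w : ℝ} (hxw : x ≤ w) :
    rcount s x = rcount s w + Multiset.card (s.filter (fun r => x < r ∧ r ≤ w)) := by
  have h1 : s.filter (x < ·) =
      (s.filter (x < ·)).filter (w < ·) + (s.filter (x < ·)).filter (fun r => ¬ w < r) :=
    (Multiset.filter_add_not _ _).symm
  have h2 : (s.filter (x < ·)).filter (w < ·) = s.filter (w < ·) := by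
    rw [Multiset.filter_filter]
    apply Multiset.filter_congr
    intro r _
    constructor
    · rintro ⟨h, _⟩; exact h
    · intro h; exact ⟨h, lt_of_le_of_lt hxw h⟩
  have h3 : (s.filter (x < ·)).filter (fun r => ¬ w < r) = s.filter (fun r => x < r ∧ r ≤ w) := by
    rw [Multiset.filter_filter]
    apply Multiset.filter_congr
    intro r _
    constructor
    · rintro ⟨h, h'⟩; exact ⟨h', not_lt.mp h⟩
    · rintro ⟨h, h'⟩; exact ⟨not_lt.mpr h', h⟩
  rw [rcount, h1, Multiset.card_add, h2, h3]
  rfl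

set_option maxHeartbeats 1000000 in
lemma core (f1 g1 : Polynomial ℝ) (n : ℕ)
    (hn : f1.natDegree = n)
    (hf1 : f1.roots.card = f1.natDegree) (hg1 : g1.roots.card = g1.natDegree)
    (hf1l : 0 < f1.leadingCoeff) (hg1l : 0 < g1.leadingCoeff)
    (hdisj : f1.roots ∩ g1.roots = 0)
    (hdeg : g1.natDegree = n ∨ g1.natDegree = n + 1)
    (hcnt : ∀ x, rcount f1.roots x ≤ rcount g1.roots x ∧
      rcount g1.roots x ≤ rcount f1.roots x + 1) :
    (X * f1 + g1).natDegree = n + 1 ∧ ((1 + X) * f1 + g1).natDegree = n + 1 ∧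
    (X * f1 + g1).roots.card = n + 1 ∧ ((1 + X) * f1 + g1).roots.card = n + 1 ∧
    (∀ x, rcount ((1 + X) * f1 + g1).roots x ≤ rcount (X * f1 + g1).roots x ∧
      rcount (X * f1 + g1).roots x ≤ rcount ((1 + X) * f1 + g1).roots x + 1) := by
  have hf10 : f1 ≠ 0 := leadingCoeff_ne_zero.mp (ne_of_gt hf1l)
  have hg10 : g1 ≠ 0 := leadingCoeff_ne_zero.mp (ne_of_gt hg1l)
  have hcard : Multiset.card f1.roots = n := by rw [hf1, hn]
  -- descending enumeration of the roots of f1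
  set L : List ℝ := f1.roots.sort (· ≤ ·) with hL
  have hLlen : L.length = n := by rw [hL, Multiset.length_sort, hcard]
  have hLsorted : L.Pairwise (· ≤ ·) := f1.roots.pairwise_sort _
  set u : ℕ → ℝ := fun i => L[n - 1 - i]! with hu'
  have hperm : (Multiset.range n).map (fun i => n - 1 - i) = Multiset.range n := by
    apply Multiset.eq_of_le_of_card_le
    · rw [Multiset.le_iff_count]
      intro a
      by_cases ha : a ∈ (Multiset.range n).map (fun i => n - 1 - i)
      · have h1 : ((Multiset.range n).map (fun i => n - 1 - i)).Nodup := by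
          apply Multiset.Nodup.map_on _ (Multiset.nodup_range n)
          intro i hi j hj hij
          rw [Multiset.mem_range] at hi hj
          omega
        have h2 := Multiset.nodup_iff_count_le_one.mp h1 a
        have h3 : a ∈ Multiset.range n := by
          obtain ⟨i, hi, rfl⟩ := Multiset.mem_map.mp ha
          rw [Multiset.mem_range] at *
          omega
        have h4 := Multiset.count_pos.mpr h3
        omega
      · simp [Multiset.count_eq_zero_of_notMem ha]
    · simp
  have hroots_eq : f1.roots = (Multiset.range n).map u := by
    have h1 : f1.roots = (L : Multiset ℝ) := (Multiset.sort_eq _ _).symm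
    rw [h1, list_eq_map_range, hLlen]
    have h2 : (Multiset.range n).map (fun i => L[i]!) =
        ((Multiset.range n).map (fun i => n - 1 - i)).map u := by
      rw [Multiset.map_map]
      apply Multiset.map_congr rfl
      intro i hi
      rw [Multiset.mem_range] at hi
      simp only [Function.comp, hu']
      congr 1
      omega
    rw [h2, hperm]
  have humem : ∀ i, i < n → u i ∈ f1.roots := by
    intro i hi
    rw [hroots_eq]
    exact Multiset.mem_map.mpr ⟨i, Multiset.mem_range.mpr hi, rfl⟩
  have humono : ∀ i j, i ≤ j → j < n → u j ≤ u i := by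
    intro i j hij hj
    have h1 : n - 1 - j < L.length := by rw [hLlen]; omega
    have h2 : n - 1 - i < L.length := by rw [hLlen]; omega
    have e1 : u j = L[n - 1 - j] := by simp only [hu']; exact getElem!_pos L _ h1
    have e2 : u i = L[n - 1 - i] := by simp only [hu']; exact getElem!_pos L _ h2
    rw [e1, e2]
    rcases Nat.eq_or_lt_of_le (show n - 1 - j ≤ n - 1 - i by omega) with h | h
    · simp only [h]
      exact le_refl _
    · simpa using hLsorted.rel_get_of_lt (show (⟨n-1-j, h1⟩ : Fin L.length) < ⟨n-1-i, h2⟩ from h)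
  have hug : ∀ i, i < n → u i ∉ g1.roots := by
    intro i hi hmem
    have h1 : 0 < Multiset.count (u i) (f1.roots ∩ g1.roots) := by
      rw [Multiset.count_inter]
      exact lt_min (Multiset.count_pos.mpr (humem i hi)) (Multiset.count_pos.mpr hmem)
    rw [hdisj] at h1
    simp at h1
  -- strict decrease
  have hstrict : ∀ i, i + 1 < n → u (i + 1) < u i := by
    intro i hi
    rcases lt_or_eq_of_le (humono i (i+1) (by omega) hi) with h | h
    · exact h
    -- if equal, f1 has a double root not shared with g1 : contradiction
    · exfalso
      set w := u i with hw
      have hwcnt : 2 ≤ Multiset.count w f1.roots := by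
        have hcnteq : Multiset.count w f1.roots =
            Multiset.card ((Multiset.range n).filter (fun j => w = u j)) := by
          rw [hroots_eq, Multiset.count_map]
        have h2' : ({i, i + 1} : Finset ℕ) ⊆ Finset.filter (fun j => w = u j) (Finset.range n) := by
          intro a ha
          rw [Finset.mem_insert, Finset.mem_singleton] at ha
          rw [Finset.mem_filter, Finset.mem_range]
          rcases ha with rfl | rfl
          · exact ⟨by omega, rfl⟩
          · exact ⟨by omega, h.symm⟩
        have h3' := Finset.card_le_card h2'
        have h4' : ({i, i + 1} : Finset ℕ).card = 2 := by
          rw [Finset.card_insert_of_notMem (by simp), Finset.card_singleton]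
        have h5' : (Finset.filter (fun j => w = u j) (Finset.range n)).card =
            Multiset.card ((Multiset.range n).filter (fun j => w = u j)) := rfl
        omega
      have hwng : Multiset.count w g1.roots = 0 := by
        rw [Multiset.count_eq_zero]
        exact hug i (by omega)
      obtain ⟨x, hx1, hx2⟩ := exists_gap (f1.roots + g1.roots) w
      have hf_x : rcount f1.roots w + 2 ≤ rcount f1.roots x := by
        rw [rcount_split f1.roots hx1.le]
        have : (2 : ℕ) ≤ Multiset.card (f1.roots.filter (fun r => x < r ∧ r ≤ w)) := by
          have hcw : Multiset.count w (f1.roots.filter (fun r => x < r ∧ r ≤ w)) =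
              Multiset.count w f1.roots := by
            rw [Multiset.count_filter, if_pos ⟨hx1, le_refl w⟩]
          calc (2:ℕ) ≤ Multiset.count w f1.roots := hwcnt
            _ = Multiset.count w (f1.roots.filter (fun r => x < r ∧ r ≤ w)) := hcw.symm
            _ ≤ _ := Multiset.count_le_card _ _
        omega
      have hg_x : rcount g1.roots x = rcount g1.roots w := by
        rw [rcount_split g1.roots hx1.le]
        have : g1.roots.filter (fun r => x < r ∧ r ≤ w) = 0 := by
          rw [Multiset.filter_eq_nil]
          rintro r hr ⟨hxr, hrw⟩
          rcases lt_or_eq_of_le hrw with h' | h'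
          · have := hx2 r (Multiset.mem_add.mpr (Or.inr hr)) h'
            linarith
          · subst h'
            have := Multiset.count_pos.mpr hr
            omega
        rw [this]
        simp
      have c1 := (hcnt x).1
      have c2 := (hcnt w).2
      omega
  -- count of f1 roots above a point in "region i"
  have hfcount : ∀ i x, i ≤ n → (i < n → u i < x) → (1 ≤ i → x < u (i - 1)) →
      rcount f1.roots x = i := by
    intro i x hin hlo hhi
    rw [hroots_eq, rcount_map_range]
    apply icount_eq_of n i u x hin
    · intro j hj
      have h1 : x < u (i - 1) := hhi (by omega)
      have h2 : u (i - 1) ≤ u j := humono j (i - 1) (by omega) (by omega)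
      linarith
    · intro j hij hj hxu
      have h1 : u i < x := hlo (by omega)
      have h2 : u j ≤ u i := humono i j hij hj
      linarith
  -- count of g1 roots at u i
  have hgcount : ∀ i, i < n → rcount g1.roots (u i) = i + 1 := by
    intro i hi
    obtain ⟨x, hx1, hx2⟩ := exists_gap (f1.roots + g1.roots) (u i)
    have hgx : rcount g1.roots x = rcount g1.roots (u i) := by
      rw [rcount_split g1.roots hx1.le]
      have : g1.roots.filter (fun r => x < r ∧ r ≤ u i) = 0 := by
        rw [Multiset.filter_eq_nil]
        rintro r hr ⟨hxr, hrw⟩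
        rcases lt_or_eq_of_le hrw with h' | h'
        · have := hx2 r (Multiset.mem_add.mpr (Or.inr hr)) h'
          linarith
        · subst h'
          exact hug i hi hr
      rw [this]; simp
    have hfx : rcount f1.roots (u i) + 1 ≤ rcount f1.roots x := by
      rw [rcount_split f1.roots hx1.le]
      have h2 : 1 ≤ Multiset.card (f1.roots.filter (fun r => x < r ∧ r ≤ u i)) := by
        have : u i ∈ f1.roots.filter (fun r => x < r ∧ r ≤ u i) :=
          Multiset.mem_filter.mpr ⟨humem i hi, hx1, le_refl _⟩
        exact Multiset.card_pos_iff_exists_mem.mpr ⟨_, this⟩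
      omega
    have hfu : rcount f1.roots (u i) = i := by
      rw [hroots_eq, rcount_map_range]
      apply icount_eq_of n i u (u i) (by omega)
      · intro j hj
        have h2 := hstrict j (by omega)
        have h3 : u i ≤ u (j + 1) := humono (j + 1) i (by omega) hi
        linarith
      · intro j hij hj hxu
        have := humono i j hij hj
        linarith
    have c1 := (hcnt x).1
    have c2 := (hcnt (u i)).2
    omega
  -- degrees and leading coefficients
  have hXf1 : (X * f1).natDegree = n + 1 := by
    have h1 := natDegree_mul (X_ne_zero (R := ℝ)) hf10
    rw [natDegree_X, hn] at h1
    omega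
  have h1X : (1 + X : Polynomial ℝ).natDegree = 1 := by
    rw [← C_1, add_comm, natDegree_X_add_C]
  have h1X0 : (1 + X : Polynomial ℝ) ≠ 0 := by
    intro hc
    have : (1 + X : Polynomial ℝ).natDegree = 0 := by rw [hc]; simp
    omega
  have h1Xf1 : ((1 + X) * f1).natDegree = n + 1 := by
    have h1 := natDegree_mul h1X0 hf10
    rw [h1X, hn] at h1
    omega
  have hg1top : 0 ≤ g1.coeff (n + 1) := by
    rcases hdeg with hd | hd
    · rw [coeff_eq_zero_of_natDegree_lt (by omega)]
    · have h2 : g1.coeff (n + 1) = g1.leadingCoeff := by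
        rw [Polynomial.leadingCoeff, hd]
      rw [h2]
      exact hg1l.le
  have hg1degle : g1.natDegree ≤ n + 1 := by rcases hdeg with hd | hd <;> omega
  have hf1top : f1.coeff (n + 1) = 0 := coeff_eq_zero_of_natDegree_lt (by omega)
  have hpcoef : (X * f1 + g1).coeff (n + 1) = f1.leadingCoeff + g1.coeff (n + 1) := by
    rw [coeff_add, coeff_X_mul]
    congr 1
    rw [Polynomial.leadingCoeff, hn]
  have hqp : (1 + X) * f1 + g1 = f1 + (X * f1 + g1) := by ring
  have hqcoef : ((1 + X) * f1 + g1).coeff (n + 1) = f1.leadingCoeff + g1.coeff (n + 1) := by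
    rw [hqp, coeff_add, hf1top, zero_add, hpcoef]
  have hpcoefpos : 0 < (X * f1 + g1).coeff (n + 1) := by rw [hpcoef]; linarith
  have hqcoefpos : 0 < ((1 + X) * f1 + g1).coeff (n + 1) := by rw [hqcoef]; linarith
  have hpdeg : (X * f1 + g1).natDegree = n + 1 := by
    have hle : (X * f1 + g1).natDegree ≤ n + 1 := by
      refine le_trans (natDegree_add_le _ _) ?_
      rw [hXf1]
      omega
    have hge := le_natDegree_of_ne_zero (ne_of_gt hpcoefpos)
    omega
  have hqdeg : ((1 + X) * f1 + g1).natDegree = n + 1 := by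
    have hle : ((1 + X) * f1 + g1).natDegree ≤ n + 1 := by
      refine le_trans (natDegree_add_le _ _) ?_
      rw [h1Xf1]
      omega
    have hge := le_natDegree_of_ne_zero (ne_of_gt hqcoefpos)
    omega
  have hplead : 0 < (X * f1 + g1).leadingCoeff := by
    rw [Polynomial.leadingCoeff, hpdeg]; exact hpcoefpos
  have hqlead : 0 < ((1 + X) * f1 + g1).leadingCoeff := by
    rw [Polynomial.leadingCoeff, hqdeg]; exact hqcoefpos
  have hp0 : (X * f1 + g1) ≠ 0 := leadingCoeff_ne_zero.mp (ne_of_gt hplead)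
  have hq0 : ((1 + X) * f1 + g1) ≠ 0 := leadingCoeff_ne_zero.mp (ne_of_gt hqlead)
  -- evaluations at the roots of f1
  have hf1eval : ∀ i, i < n → f1.eval (u i) = 0 := by
    intro i hi
    have h2 := humem i hi
    rw [mem_roots'] at h2
    exact h2.2
  have hsigng : ∀ i, i < n → 0 < (-1 : ℝ) ^ (i + 1) * g1.eval (u i) := by
    intro i hi
    have h2 := eval_sign g1 hg1 hg1l (u i) (hug i hi)
    rw [hgcount i hi] at h2
    exact h2
  have hsignp : ∀ i, i < n → 0 < (-1 : ℝ) ^ (i + 1) * (X * f1 + g1).eval (u i) := by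
    intro i hi
    have h2 : (X * f1 + g1).eval (u i) = g1.eval (u i) := by
      rw [eval_add, eval_mul, eval_X, hf1eval i hi]
      ring
    rw [h2]
    exact hsigng i hi
  have hsignq : ∀ i, i < n → 0 < (-1 : ℝ) ^ (i + 1) * ((1 + X) * f1 + g1).eval (u i) := by
    intro i hi
    have h2 : ((1 + X) * f1 + g1).eval (u i) = g1.eval (u i) := by
      rw [eval_add, eval_mul, hf1eval i hi]
      ring
    rw [h2]
    exact hsigng i hi
  obtain ⟨α, hαroots, hαlo, hαhi⟩ := main_roots n u hstrict (X * f1 + g1) hpdeg hplead hsignp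
  obtain ⟨β, hβroots, hβlo, hβhi⟩ := main_roots n u hstrict ((1 + X) * f1 + g1) hqdeg hqlead hsignq
  have hpcard : (X * f1 + g1).roots.card = n + 1 := by rw [hαroots]; simp
  have hqcard : ((1 + X) * f1 + g1).roots.card = n + 1 := by rw [hβroots]; simp
  have hprr : (X * f1 + g1).roots.card = (X * f1 + g1).natDegree := by rw [hpcard, hpdeg]
  -- β i ≤ α i
  have hba : ∀ i, i ≤ n → β i ≤ α i := by
    intro i hin
    by_contra hc
    push_neg at hc
    set x := β i with hxd
    have hxu : 1 ≤ i → x < u (i - 1) := fun h1 => hβhi i h1 hin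
    have hxl : i < n → u i < x := fun h2 => hβlo i h2
    have hfx : rcount f1.roots x = i := hfcount i x hin hxl hxu
    have hxnotf : x ∉ f1.roots := by
      rw [hroots_eq]
      intro hmem
      obtain ⟨j, hj, hje⟩ := Multiset.mem_map.mp hmem
      rw [Multiset.mem_range] at hj
      rcases Nat.lt_or_ge j i with h' | h'
      · have h2 : u (i - 1) ≤ u j := humono j (i - 1) (by omega) (by omega)
        have h3 : x < u (i - 1) := hxu (by omega)
        rw [hje] at h2
        linarith
      · have h2 : u j ≤ u i := humono i j h' hj
        have h3 : u i < x := hxl (by omega)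
        rw [hje] at h2
        linarith
    have hsf := eval_sign f1 hf1 hf1l x hxnotf
    rw [hfx] at hsf
    have hpx : rcount (X * f1 + g1).roots x = i := by
      rw [hαroots, rcount_map_range]
      apply icount_eq_of (n + 1) i α x (by omega)
      · intro j hj
        have h1 : u (i - 1) ≤ u j := humono j (i - 1) (by omega) (by omega)
        have h2 : u j < α j := hαlo j (by omega)
        have h3 : x < u (i - 1) := hxu (by omega)
        linarith
      · intro j hij hj hxa
        rcases Nat.eq_or_lt_of_le hij with h' | h'
        · subst h'
          exact absurd hxa (not_lt.mpr hc.le)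
        · have h1 : α j < u (j - 1) := hαhi j (by omega) (by omega)
          have h2 : u (j - 1) ≤ u i := humono i (j - 1) (by omega) (by omega)
          have h3 : u i < x := hxl (by omega)
          linarith
    have hβrootx : ((1 + X) * f1 + g1).eval x = 0 := by
      have hmem : x ∈ ((1 + X) * f1 + g1).roots := by
        rw [hβroots]
        exact Multiset.mem_map.mpr ⟨i, Multiset.mem_range.mpr (by omega), rfl⟩
      rw [mem_roots'] at hmem
      exact hmem.2
    have hpeval : (X * f1 + g1).eval x = -f1.eval x := by
      have h2 : ((1 + X) * f1 + g1).eval x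
          = f1.eval x + (X * f1 + g1).eval x := by
        rw [hqp, eval_add]
      rw [hβrootx] at h2
      linarith
    have hfne : f1.eval x ≠ 0 := by
      intro hc2
      rw [hc2] at hsf
      simp at hsf
    have hxnotp : x ∉ (X * f1 + g1).roots := by
      rw [mem_roots']
      rintro ⟨-, h2⟩
      rw [Polynomial.IsRoot, hpeval] at h2
      exact hfne (by linarith)
    have hsp := eval_sign (X * f1 + g1) hprr hplead x hxnotp
    rw [hpx, hpeval] at hsp
    nlinarith [hsf, hsp]
  refine ⟨hpdeg, hqdeg, hpcard, hqcard, fun x => ⟨?_, ?_⟩⟩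
  · rw [hαroots, hβroots, rcount_map_range, rcount_map_range]
    exact icount_mono (n + 1) β α x (fun i hi hlt => lt_of_lt_of_le hlt (hba i (by omega)))
  · rw [hαroots, hβroots, rcount_map_range, rcount_map_range]
    apply icount_le_down (n + 1) (n + 1) α β x
    intro i hi hxa
    refine ⟨by omega, ?_⟩
    have h1 : α (i + 1) < u (i + 1 - 1) := hαhi (i + 1) (by omega) (by omega)
    have h1' : α (i + 1) < u i := by simpa using h1
    have h2 : u i < β i := hβlo i (by omega)
    linarith

lemma ascRoots_length (p : Polynomial ℝ) : (ascRoots p).length = Multiset.card p.roots := by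
  rw [ascRoots, Multiset.length_sort]

lemma rcount_roots_eq (p : Polynomial ℝ) (x : ℝ) :
    rcount p.roots x =
      icount (ascRoots p).length (fun i => (ascRoots p)[i]!) x := by
  conv_lhs => rw [← Multiset.sort_eq p.roots (· ≤ ·)]
  rw [show (Multiset.sort p.roots (· ≤ ·) : List ℝ) = ascRoots p from rfl,
    list_eq_map_range (ascRoots p), rcount_map_range]

lemma ascRoots_sorted (p : Polynomial ℝ) : (ascRoots p).Pairwise (· ≤ ·) :=
  p.roots.pairwise_sort _

lemma hyp_count (f g : Polynomial ℝ) (hfg : Interlaces f g) :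
    (g.natDegree = f.natDegree ∨ g.natDegree = f.natDegree + 1) ∧
    ∀ x, rcount f.roots x ≤ rcount g.roots x ∧ rcount g.roots x ≤ rcount f.roots x + 1 := by
  obtain ⟨hg, hf, hcase⟩ := hfg
  have hflen : (ascRoots f).length = f.natDegree := by rw [ascRoots_length, hf]
  have hglen : (ascRoots g).length = g.natDegree := by rw [ascRoots_length, hg]
  rcases hcase with ⟨hdeq, h1, h2⟩ | ⟨hdeq, h⟩
  · refine ⟨Or.inl hdeq, fun x => ⟨?_, ?_⟩⟩
    · rw [rcount_roots_eq f x, rcount_roots_eq g x, hflen, hglen, hdeq]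
      apply icount_mono
      intro i hi hx
      have := h1 i (by omega)
      linarith
    · rw [rcount_roots_eq f x, rcount_roots_eq g x, hflen, hglen, hdeq]
      apply icount_le_up
      intro i hi hx
      refine ⟨hi, ?_⟩
      have := h2 i (by omega)
      linarith
  · refine ⟨Or.inr hdeq, fun x => ⟨?_, ?_⟩⟩
    · rw [rcount_roots_eq f x, rcount_roots_eq g x, hflen, hglen, hdeq]
      apply icount_le_inj
      intro i hi hx
      refine ⟨by omega, ?_⟩
      have := (h i hi).2
      linarith
    · rw [rcount_roots_eq f x, rcount_roots_eq g x, hflen, hglen, hdeq]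
      apply icount_le_same_succ
      intro i hi hx
      have := (h i hi).1
      linarith

lemma count_to_interlaces (p q : Polynomial ℝ) (hp : RealRooted p) (hq : RealRooted q)
    (hdeg : p.natDegree = q.natDegree)
    (hcnt : ∀ x, rcount q.roots x ≤ rcount p.roots x ∧
      rcount p.roots x ≤ rcount q.roots x + 1) :
    Interlaces q p := by
  have hplen : (ascRoots p).length = p.natDegree := by rw [ascRoots_length, hp]
  have hqlen : (ascRoots q).length = q.natDegree := by rw [ascRoots_length, hq]
  refine ⟨hp, hq, Or.inl ⟨hdeg, ?_, ?_⟩⟩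
  · intro i hi
    by_contra hcon
    push_neg at hcon
    set x := (ascRoots p)[i]! with hx
    have hA := icount_ge_of_sorted (ascRoots q) (ascRoots_sorted q) i
      (by rw [hqlen, ← hdeg]; omega) x hcon
    have hB := icount_lt_of_sorted (ascRoots p) (ascRoots_sorted p) i
      (by rw [hplen]; omega) x (le_refl x)
    have hC := (hcnt x).1
    rw [rcount_roots_eq p x, rcount_roots_eq q x, hplen, hqlen, ← hdeg] at hC
    rw [hplen] at hB
    rw [hqlen, ← hdeg] at hA
    omega
  · intro i hi
    by_contra hcon
    push_neg at hcon
    set x := (ascRoots q)[i + 1]! with hx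
    have hA := icount_ge_of_sorted (ascRoots p) (ascRoots_sorted p) i
      (by rw [hplen]; omega) x hcon
    have hB := icount_lt_of_sorted (ascRoots q) (ascRoots_sorted q) (i + 1)
      (by rw [hqlen, ← hdeg]; omega) x (le_refl x)
    have hC := (hcnt x).2
    rw [rcount_roots_eq p x, rcount_roots_eq q x, hplen, hqlen, ← hdeg] at hC
    rw [hplen] at hA
    rw [hqlen, ← hdeg] at hB
    omega

lemma rcount_singleton (r x : ℝ) : rcount {r} x = if x < r then 1 else 0 := by
  rw [rcount, Multiset.filter_singleton]
  split <;> simp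

theorem stmt3 (f g : Polynomial ℝ)
    (hf : RealRooted f) (hg : RealRooted g)
    (hf' : ∀ i, 0 ≤ f.coeff i) (hg' : ∀ i, 0 ≤ g.coeff i)
    (hfg : Interlaces f g) :
    Interlaces ((1 + X) * f + g) (X * f + g) := by
  by_cases hf0 : f = 0
  · subst hf0
    simp only [mul_zero, zero_add]
    refine ⟨hg, hg, Or.inl ⟨rfl, fun i _ => le_refl _, fun i hi => ?_⟩⟩
    have hlen : (ascRoots g).length = g.natDegree := by rw [ascRoots_length, hg]
    have h1 : i + 1 < (ascRoots g).length := by omega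
    rw [getElem!_pos (ascRoots g) i (by omega), getElem!_pos (ascRoots g) (i+1) h1]
    simpa using (ascRoots_sorted g).rel_get_of_lt
      (show (⟨i, by omega⟩ : Fin (ascRoots g).length) < ⟨i + 1, h1⟩ from Nat.lt_succ_self i)
  obtain ⟨hdegopt, hMfg⟩ := hyp_count f g hfg
  have hflead : 0 < f.leadingCoeff := by
    have h1 : f.leadingCoeff ≠ 0 := leadingCoeff_ne_zero.mpr hf0
    have h2 : 0 ≤ f.leadingCoeff := hf' f.natDegree
    exact lt_of_le_of_ne h2 (Ne.symm h1)
  -- we establish the four key facts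
  suffices hmain : (X * f + g).natDegree = ((1 + X) * f + g).natDegree ∧
      RealRooted (X * f + g) ∧ RealRooted ((1 + X) * f + g) ∧
      (∀ x, rcount ((1 + X) * f + g).roots x ≤ rcount (X * f + g).roots x ∧
        rcount (X * f + g).roots x ≤ rcount ((1 + X) * f + g).roots x + 1) by
    exact count_to_interlaces _ _ hmain.2.1 hmain.2.2.1 hmain.1 hmain.2.2.2
  by_cases hg0 : g = 0
  · -- then f is a positive constant
    subst hg0
    have hfr : f.roots = 0 := by
      rw [Multiset.eq_zero_iff_forall_notMem]
      intro r hr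
      have h1 : 0 < rcount f.roots (r - 1) := by
        rw [rcount]
        apply Multiset.card_pos_iff_exists_mem.mpr
        exact ⟨r, Multiset.mem_filter.mpr ⟨hr, by norm_num⟩⟩
      have h2 := (hMfg (r - 1)).1
      rw [Polynomial.roots_zero] at h2
      have h3 : rcount 0 (r - 1) = 0 := by rw [rcount]; simp
      omega
    have hfdeg : f.natDegree = 0 := by
      have := hf
      rw [RealRooted, hfr] at this
      simpa using this.symm
    have hfc : f = C (f.coeff 0) := eq_C_of_natDegree_eq_zero hfdeg
    set a := f.coeff 0 with ha
    have ha0 : a ≠ 0 := by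
      intro h
      rw [h, C_0] at hfc
      exact hf0 hfc
    have hpform : X * f + 0 = C a * X := by rw [hfc]; ring
    have hqform : (1 + X) * f + 0 = C a * (X - C (-1)) := by
      rw [hfc]
      have : (C (-1) : Polynomial ℝ) = -1 := by simp
      rw [this]
      ring
    have hproots : (X * f + 0).roots = {0} := by
      rw [hpform, roots_C_mul _ ha0, roots_X]
    have hqroots : ((1 + X) * f + 0).roots = {-1} := by
      rw [hqform, roots_C_mul _ ha0, roots_X_sub_C]
    have hpdeg : (X * f + 0).natDegree = 1 := by
      rw [hpform, natDegree_C_mul ha0, natDegree_X]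
    have hqdeg : ((1 + X) * f + 0).natDegree = 1 := by
      rw [hqform, natDegree_C_mul ha0, natDegree_X_sub_C]
    refine ⟨by rw [hpdeg, hqdeg], ?_, ?_, ?_⟩
    · rw [RealRooted, hproots, hpdeg]; simp
    · rw [RealRooted, hqroots, hqdeg]; simp
    · intro x
      rw [hproots, hqroots, rcount_singleton, rcount_singleton]
      have himp : x < -1 → x < 0 := fun h => by linarith
      constructor <;> split_ifs with h1 h2 <;> try omega
      all_goals first
        | omega
        | (exfalso; exact (by linarith : False))
  · -- main case : f ≠ 0 and g ≠ 0
    have hglead : 0 < g.leadingCoeff := by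
      have h1 : g.leadingCoeff ≠ 0 := leadingCoeff_ne_zero.mpr hg0
      have h2 : 0 ≤ g.leadingCoeff := hg' g.natDegree
      exact lt_of_le_of_ne h2 (Ne.symm h1)
    set c := f.roots ∩ g.roots with hc
    have hcf : c ≤ f.roots := Multiset.inter_le_left
    have hcg : c ≤ g.roots := Multiset.inter_le_right
    set Pc := (c.map (fun a => X - C a)).prod with hPc
    have hPcmonic : Pc.Monic :=
      monic_multiset_prod_of_monic _ _ (fun a _ => monic_X_sub_C a)
    have hPc0 : Pc ≠ 0 := hPcmonic.ne_zero
    have hPcroots : Pc.roots = c := roots_multiset_prod_X_sub_C c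
    have hPcdeg : Pc.natDegree = Multiset.card c := by
      rw [hPc, natDegree_multiset_prod_X_sub_C_eq_card]
    have hfsplit : f.roots = (f.roots - c) + c := (tsub_add_cancel_of_le hcf).symm
    have hgsplit : g.roots = (g.roots - c) + c := (tsub_add_cancel_of_le hcg).symm
    set f1 := C f.leadingCoeff * ((f.roots - c).map (fun a => X - C a)).prod with hf1d
    set g1 := C g.leadingCoeff * ((g.roots - c).map (fun a => X - C a)).prod with hg1d
    have hfprod : f = Pc * f1 := by
      have h1 := C_leadingCoeff_mul_prod_multiset_X_sub_C hf
      conv_lhs => rw [← h1]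
      rw [hf1d, hPc]
      conv_lhs => rw [hfsplit]
      rw [Multiset.map_add, Multiset.prod_add]
      ring
    have hgprod : g = Pc * g1 := by
      have h1 := C_leadingCoeff_mul_prod_multiset_X_sub_C hg
      conv_lhs => rw [← h1]
      rw [hg1d, hPc]
      conv_lhs => rw [hgsplit]
      rw [Multiset.map_add, Multiset.prod_add]
      ring
    have hf1roots : f1.roots = f.roots - c := by
      rw [hf1d, roots_C_mul _ (ne_of_gt hflead), roots_multiset_prod_X_sub_C]
    have hg1roots : g1.roots = g.roots - c := by
      rw [hg1d, roots_C_mul _ (ne_of_gt hglead), roots_multiset_prod_X_sub_C]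
    have hf1deg : f1.natDegree = Multiset.card (f.roots - c) := by
      rw [hf1d, natDegree_C_mul (ne_of_gt hflead), natDegree_multiset_prod_X_sub_C_eq_card]
    have hg1deg : g1.natDegree = Multiset.card (g.roots - c) := by
      rw [hg1d, natDegree_C_mul (ne_of_gt hglead), natDegree_multiset_prod_X_sub_C_eq_card]
    have hf1rr : f1.roots.card = f1.natDegree := by rw [hf1roots, hf1deg]
    have hg1rr : g1.roots.card = g1.natDegree := by rw [hg1roots, hg1deg]
    have hf1lead : 0 < f1.leadingCoeff := by
      rw [hf1d, leadingCoeff_mul, leadingCoeff_C,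
        (monic_multiset_prod_of_monic _ _ (fun a _ => monic_X_sub_C a)).leadingCoeff, mul_one]
      exact hflead
    have hg1lead : 0 < g1.leadingCoeff := by
      rw [hg1d, leadingCoeff_mul, leadingCoeff_C,
        (monic_multiset_prod_of_monic _ _ (fun a _ => monic_X_sub_C a)).leadingCoeff, mul_one]
      exact hglead
    have hdisj : f1.roots ∩ g1.roots = 0 := by
      rw [hf1roots, hg1roots, Multiset.eq_zero_iff_forall_notMem]
      intro a hmem
      rw [Multiset.mem_inter] at hmem
      have h1 := Multiset.count_pos.mpr hmem.1
      have h2 := Multiset.count_pos.mpr hmem.2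
      rw [Multiset.count_sub] at h1 h2
      have h3 : Multiset.count a c = min (Multiset.count a f.roots) (Multiset.count a g.roots) := by
        rw [hc, Multiset.count_inter]
      omega
    have hcardf : Multiset.card f.roots = Multiset.card c + Multiset.card (f.roots - c) := by
      rw [Multiset.card_sub hcf]
      have := Multiset.card_le_card hcf
      omega
    have hcardg : Multiset.card g.roots = Multiset.card c + Multiset.card (g.roots - c) := by
      rw [Multiset.card_sub hcg]
      have := Multiset.card_le_card hcg
      omega
    have hfnd : f.natDegree = Multiset.card c + f1.natDegree := by
      rw [hf1deg, ← hcardf, ← hf]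
    have hgnd : g.natDegree = Multiset.card c + g1.natDegree := by
      rw [hg1deg, ← hcardg, ← hg]
    have hdeg1 : g1.natDegree = f1.natDegree ∨ g1.natDegree = f1.natDegree + 1 := by
      rcases hdegopt with h | h <;> omega
    have hcnt1 : ∀ x, rcount f1.roots x ≤ rcount g1.roots x ∧
        rcount g1.roots x ≤ rcount f1.roots x + 1 := by
      intro x
      have h1 : rcount f.roots x = rcount f1.roots x + rcount c x := by
        conv_lhs => rw [hfsplit]
        rw [rcount_add, hf1roots]
      have h2 : rcount g.roots x = rcount g1.roots x + rcount c x := by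
        conv_lhs => rw [hgsplit]
        rw [rcount_add, hg1roots]
      have h3 := (hMfg x).1
      have h4 := (hMfg x).2
      omega
    obtain ⟨D1, D2, D3, D4, D5⟩ := core f1 g1 f1.natDegree rfl hf1rr hg1rr hf1lead hg1lead
      hdisj hdeg1 hcnt1
    have hp10 : X * f1 + g1 ≠ 0 := by
      intro h0
      rw [h0] at D1
      simp at D1
    have hq10 : (1 + X) * f1 + g1 ≠ 0 := by
      intro h0
      rw [h0] at D2
      simp at D2
    have hpfact : X * f + g = Pc * (X * f1 + g1) := by rw [hfprod, hgprod]; ring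
    have hqfact : (1 + X) * f + g = Pc * ((1 + X) * f1 + g1) := by rw [hfprod, hgprod]; ring
    have hproots : (X * f + g).roots = c + (X * f1 + g1).roots := by
      rw [hpfact, roots_mul (mul_ne_zero hPc0 hp10), hPcroots]
    have hqroots : ((1 + X) * f + g).roots = c + ((1 + X) * f1 + g1).roots := by
      rw [hqfact, roots_mul (mul_ne_zero hPc0 hq10), hPcroots]
    have hpdeg : (X * f + g).natDegree = Multiset.card c + (f1.natDegree + 1) := by
      rw [hpfact, natDegree_mul hPc0 hp10, hPcdeg, D1]
    have hqdeg : ((1 + X) * f + g).natDegree = Multiset.card c + (f1.natDegree + 1) := by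
      rw [hqfact, natDegree_mul hPc0 hq10, hPcdeg, D2]
    refine ⟨by rw [hpdeg, hqdeg], ?_, ?_, ?_⟩
    · rw [RealRooted, hproots, hpdeg, Multiset.card_add, D3]
    · rw [RealRooted, hqroots, hqdeg, Multiset.card_add, D4]
    · intro x
      rw [hproots, hqroots, rcount_add, rcount_add]
      have := D5 x
      omega

end InterlacingProof
end

section
/- The matrix [[1+z, 1],[1+z, 1+z]] does not preserve interlacing: applying it to the interlacing pair (1+z, z) yields the pair (1+3z+z², 1+3z+2z²), and 1+3z+z² does not interlace 1+3z+2z². -/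
open Polynomial

/-! Both `1 + X` and `X` are linear, with roots `-1 ≤ 0`, so they interlace. The images factor
with roots `(-3 ± √5) / 2` and `-1, -1/2`; since `√5 > 2`, the larger root `(-3 + √5) / 2` of
`1 + 3X + X²` exceeds the larger root `-1/2` of `1 + 3X + 2X²`, which interlacing of two
polynomials of equal degree forbids. -/

lemma X_sub_C_mul_X_sub_C {R : Type*} [CommRing R] (a b : R) :
    (X - C a) * (X - C b) = X ^ 2 - C (a + b) * X + C (a * b) := by
  simp only [map_add, map_mul]; ring

lemma roots_X_sub_C_mul_X_sub_C {R : Type*} [CommRing R] [IsDomain R] (a b : R) :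
    ((X - C a) * (X - C b)).roots = {a, b} := by
  rw [roots_mul (mul_ne_zero (X_sub_C_ne_zero a) (X_sub_C_ne_zero b)), roots_X_sub_C,
    roots_X_sub_C]
  rfl

lemma ascRoots_C_mul {c : ℝ} (hc : c ≠ 0) (p : ℝ[X]) : ascRoots (C c * p) = ascRoots p := by
  rw [ascRoots, ascRoots, roots_C_mul _ hc]

lemma ascRoots_X_sub_C (a : ℝ) : ascRoots (X - C a) = [a] := by
  rw [ascRoots, roots_X_sub_C, Multiset.sort_singleton]

lemma ascRoots_X_sub_C_mul_X_sub_C {a b : ℝ} (hab : a ≤ b) :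
    ascRoots ((X - C a) * (X - C b)) = [a, b] := by
  rw [ascRoots, roots_X_sub_C_mul_X_sub_C, Multiset.insert_eq_cons,
    Multiset.sort_cons _ _ _ (by simpa using hab), Multiset.sort_singleton]

lemma realRooted_X_sub_C (a : ℝ) : RealRooted (X - C a) := by
  simp [RealRooted]

lemma interlaces_X_sub_C {a b : ℝ} (hba : b ≤ a) : Interlaces (X - C b) (X - C a) := by
  refine ⟨realRooted_X_sub_C a, realRooted_X_sub_C b, Or.inl ⟨by simp, fun i hi => ?_, by simp⟩⟩
  obtain rfl : i = 0 := by simpa using hi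
  simpa [ascRoots_X_sub_C] using hba

lemma not_interlaces_of_natDegree_eq {g f : ℝ[X]} (hdeg : f.natDegree = g.natDegree) {i : ℕ}
    (hi : i < f.natDegree) (hlt : (ascRoots f)[i]! < (ascRoots g)[i]!) : ¬ Interlaces g f := by
  rintro ⟨-, -, ⟨-, hle, -⟩ | ⟨hsucc, -⟩⟩
  · exact (hle i hi).not_gt hlt
  · omega

lemma one_add_three_mul_X_add_X_sq :
    (1 + 3 * X + X ^ 2 : ℝ[X]) = (X - C ((-3 - √5) / 2)) * (X - C ((-3 + √5) / 2)) := by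
  have hsqrt : √5 * √5 = 5 := Real.mul_self_sqrt (by norm_num)
  rw [X_sub_C_mul_X_sub_C, show (-3 - √5) / 2 + (-3 + √5) / 2 = -3 by ring,
    show (-3 - √5) / 2 * ((-3 + √5) / 2) = 1 by linear_combination -hsqrt / 4]
  simp only [map_neg, C_ofNat, map_one]; ring

lemma one_add_three_mul_X_add_two_mul_X_sq :
    (1 + 3 * X + 2 * X ^ 2 : ℝ[X]) = C 2 * ((X - C (-1)) * (X - C (-1 / 2))) := by
  rw [X_sub_C_mul_X_sub_C, mul_add, mul_sub, ← mul_assoc, ← C_mul, ← C_mul]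
  norm_num [C_ofNat]; ring

lemma not_interlaces_one_add_three_mul_X_add_X_sq :
    ¬ Interlaces (1 + 3 * X + X ^ 2 : ℝ[X]) (1 + 3 * X + 2 * X ^ 2) := by
  have hsqrt : 2 < √5 := by rw [Real.lt_sqrt (by norm_num)]; norm_num
  have hdeg_g : (1 + 3 * X + X ^ 2 : ℝ[X]).natDegree = 2 := by compute_degree!
  have hdeg_f : (1 + 3 * X + 2 * X ^ 2 : ℝ[X]).natDegree = 2 := by compute_degree!
  refine not_interlaces_of_natDegree_eq (hdeg_f.trans hdeg_g.symm) (i := 1) (by omega) ?_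
  rw [one_add_three_mul_X_add_X_sq, one_add_three_mul_X_add_two_mul_X_sq,
    ascRoots_C_mul two_ne_zero, ascRoots_X_sub_C_mul_X_sub_C (by norm_num),
    ascRoots_X_sub_C_mul_X_sub_C (by linarith)]
  simp only [List.getElem!_cons_succ, List.getElem!_cons_zero]
  linarith

theorem stmt5 :
    Interlaces (1 + X) (X : Polynomial ℝ) ∧
    (1 + X) * (1 + X) + 1 * X = (1 + 3 * X + X ^ 2 : Polynomial ℝ) ∧
    (1 + X) * (1 + X) + (1 + X) * X = (1 + 3 * X + 2 * X ^ 2 : Polynomial ℝ) ∧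
    ¬ Interlaces (1 + 3 * X + X ^ 2 : Polynomial ℝ) (1 + 3 * X + 2 * X ^ 2) := by
  refine ⟨?_, by ring, by ring, not_interlaces_one_add_three_mul_X_add_X_sq⟩
  convert interlaces_X_sub_C (show (-1 : ℝ) ≤ 0 by norm_num) using 1 <;> simp [add_comm]
end

section
/- For every positive integer n, the binomial Eulerian polynomial satisfies \tilde{A}_n(z) = ∑_{π ∈ S_n} (1+z)^{fix(π)} z^{exc(π)}, where fix(π) is the number of fixed points and exc(π) the number of excedances of π. -/
open Polynomial

open scoped Classical in
/-- The descent number of a permutation `π` of `{0, …, m-1}` (viewed as the word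
`π(0) π(1) ⋯ π(m-1)`): the number of indices `i` with `π(i) > π(i+1)`. -/
noncomputable def desNum {m : ℕ} (π : Equiv.Perm (Fin m)) : ℕ :=
  (Finset.univ.filter
    fun i : Fin m => ∃ h : (i : ℕ) + 1 < m, π ⟨(i : ℕ) + 1, h⟩ < π i).card

/-- The `m`-th Eulerian polynomial `A_m(z) = ∑_{π ∈ S_m} z^{des(π)}`. -/
noncomputable def EulerianPoly (m : ℕ) : Polynomial ℝ :=
  ∑ π : Equiv.Perm (Fin m), X ^ desNum π

/-- The binomial Eulerian polynomial
`Ã_n(z) = 1 + z ∑_{m=1}^n (n choose m) A_m(z)`. -/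
noncomputable def binomialEulerian (n : ℕ) : Polynomial ℝ :=
  1 + X * ∑ m ∈ Finset.Icc 1 n, (n.choose m : Polynomial ℝ) * EulerianPoly m

/-- The excedance number of `π`: the number of positions `i` with `π(i) > i`. -/
noncomputable def excNum {n : ℕ} (π : Equiv.Perm (Fin n)) : ℕ :=
  (Finset.univ.filter fun i : Fin n => i < π i).card

/-- The number of fixed points of `π`. -/
noncomputable def fixNum {n : ℕ} (π : Equiv.Perm (Fin n)) : ℕ :=
  (Finset.univ.filter fun i : Fin n => π i = i).card

open Finset Equiv
open scoped Classical

noncomputable def antiexcNum {n : ℕ} (π : Equiv.Perm (Fin n)) : ℕ :=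
  (Finset.univ.filter fun i : Fin n => π i < i).card

def descentAt {m : ℕ} (τ : Equiv.Perm (Fin m)) (j : ℕ) : Prop :=
  ∃ h : j + 1 < m, τ ⟨j + 1, h⟩ < τ ⟨j, by omega⟩

noncomputable def dfun {m : ℕ} (τ : Equiv.Perm (Fin m)) : ℕ → ℕ :=
  fun j => if descentAt τ j then 1 else 0

lemma desNum_eq {m : ℕ} (τ : Equiv.Perm (Fin m)) :
    desNum τ = ∑ j ∈ Finset.range m, dfun τ j := by
  show _ = ∑ j ∈ Finset.range m, if descentAt τ j then 1 else 0
  rw [desNum, Finset.card_filter]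
  rw [← Fin.sum_univ_eq_sum_range (fun j => if descentAt τ j then 1 else 0) m]
  refine Finset.sum_congr rfl fun i _ => if_congr ?_ rfl rfl
  simp [descentAt, Fin.eta]

lemma descentAt_lt {m : ℕ} {τ : Equiv.Perm (Fin m)} {j : ℕ} (h : descentAt τ j) :
    j + 1 < m := h.1

lemma desNum_eq' {m : ℕ} (τ : Equiv.Perm (Fin m)) :
    desNum τ = ∑ j ∈ Finset.range (m - 1), dfun τ j := by
  rw [desNum_eq]
  refine (Finset.sum_subset (Finset.range_subset_range.2 (by omega)) fun j hj hj' => ?_).symm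
  simp only [Finset.mem_range] at hj hj'
  rw [dfun, if_neg]
  intro h
  exact hj' (by have := h.1; omega)

lemma dfun_pos {m : ℕ} {τ : Equiv.Perm (Fin m)} {j : ℕ} (h : descentAt τ j) : dfun τ j = 1 := by
  rw [dfun, if_pos h]

lemma dfun_neg {m : ℕ} {τ : Equiv.Perm (Fin m)} {j : ℕ} (h : ¬ descentAt τ j) : dfun τ j = 0 := by
  rw [dfun, if_neg h]

lemma dfun_congr {m : ℕ} (τ : Equiv.Perm (Fin m)) {j k : ℕ} (hiff : descentAt τ j ↔ descentAt τ k) :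
    dfun τ j = dfun τ k := by
  simp only [dfun]
  exact if_congr hiff rfl rfl

lemma antiexcNum_eq {n : ℕ} (σ : Equiv.Perm (Fin n)) :
    antiexcNum σ = ∑ i : Fin n, if σ i < i then 1 else 0 := by
  rw [antiexcNum, Finset.card_filter]

lemma card_lt_inv {n : ℕ} (σ : Equiv.Perm (Fin n)) :
    (Finset.univ.filter fun b : Fin n => b < σ⁻¹ b).card = antiexcNum σ := by
  rw [antiexcNum]
  refine Finset.card_bij' (fun b _ => σ⁻¹ b) (fun i _ => σ i) ?_ ?_ ?_ ?_
  · intro b hb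
    simp only [Finset.mem_filter, Finset.mem_univ, true_and] at hb ⊢
    simpa using hb
  · intro i hi
    simp only [Finset.mem_filter, Finset.mem_univ, true_and] at hi ⊢
    simpa using hi
  · intro b _; simp
  · intro i _; simp

lemma transfer {ι κ : Type} [Fintype ι] [Fintype κ] (w : ι → ℕ) (v : κ → ℕ)
    (h : ∑ i : ι, (X : ℝ[X]) ^ (w i) = ∑ j : κ, (X : ℝ[X]) ^ (v j)) (g : ℕ → ℝ[X]) :
    ∑ i : ι, g (w i) = ∑ j : κ, g (v j) := by
  have hc : ∀ k, (Finset.univ.filter fun i => w i = k).card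
      = (Finset.univ.filter fun j => v j = k).card := by
    intro k
    have h2 := congrArg (fun p => Polynomial.coeff p k) h
    simp only [Polynomial.finset_sum_coeff, Polynomial.coeff_X_pow] at h2
    have e1 : (∑ i : ι, if k = w i then (1:ℝ) else 0) = ((Finset.univ.filter fun i => w i = k).card : ℝ) := by
      rw [Finset.sum_boole]
      congr 2
      simp [eq_comm]
    have e2 : (∑ j : κ, if k = v j then (1:ℝ) else 0) = ((Finset.univ.filter fun j => v j = k).card : ℝ) := by
      rw [Finset.sum_boole]
      congr 2
      simp [eq_comm]
    exact_mod_cast e1.symm.trans (h2.trans e2)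
  have key : ∀ {α : Type} [Fintype α] (u : α → ℕ) (N : ℕ), (∀ a : α, u a < N) →
      ∑ a : α, g (u a) = ∑ k ∈ Finset.range N, (Finset.univ.filter fun a => u a = k).card • g k := by
    intro α _ u N hN
    rw [← Finset.sum_fiberwise_of_maps_to (g := u) (t := Finset.range N)
      (fun a _ => Finset.mem_range.2 (hN a)) (fun a => g (u a))]
    refine Finset.sum_congr rfl fun k _ => ?_
    rw [Finset.sum_congr rfl (fun a ha => by
      rw [(Finset.mem_filter.1 ha).2]), Finset.sum_const]
  set N := max (Finset.univ.sup w) (Finset.univ.sup v) + 1 with hNdef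
  have hw' : ∀ i, w i < N := fun i =>
    Nat.lt_succ_of_le (le_trans (Finset.le_sup (Finset.mem_univ i)) (le_max_left _ _))
  have hv : ∀ j, v j < N := fun j =>
    Nat.lt_succ_of_le (le_trans (Finset.le_sup (Finset.mem_univ j)) (le_max_right _ _))
  rw [key w N hw', key v N hv]
  exact Finset.sum_congr rfl fun k _ => by rw [hc k]
-- PART B : insertion for antiexcedances
section InsA
variable {m : ℕ}

noncomputable def fA (σ : Equiv.Perm (Fin m)) (t : Fin (m + 1)) : Fin (m + 1) → Fin (m + 1) :=
  Fin.lastCases t (fun b => if (σ b).castSucc = t then Fin.last m else (σ b).castSucc)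

lemma fA_last (σ : Equiv.Perm (Fin m)) (t : Fin (m + 1)) : fA σ t (Fin.last m) = t :=
  Fin.lastCases_last ..

lemma fA_castSucc (σ : Equiv.Perm (Fin m)) (t : Fin (m + 1)) (b : Fin m) :
    fA σ t b.castSucc = if (σ b).castSucc = t then Fin.last m else (σ b).castSucc :=
  Fin.lastCases_castSucc ..

lemma fA_inj (σ : Equiv.Perm (Fin m)) (t : Fin (m + 1)) : Function.Injective (fA σ t) := by
  intro x y hxy
  induction x using Fin.lastCases with
  | last =>
    induction y using Fin.lastCases with
    | last => rfl
    | cast b =>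
      rw [fA_last, fA_castSucc] at hxy
      split_ifs at hxy with h1
      · exact absurd (h1.trans hxy) (Fin.castSucc_lt_last _).ne
      · exact absurd hxy.symm h1
  | cast b =>
    induction y using Fin.lastCases with
    | last =>
      rw [fA_last, fA_castSucc] at hxy
      split_ifs at hxy with h1
      · exact absurd (h1.trans hxy.symm) (Fin.castSucc_lt_last _).ne
      · exact absurd hxy h1
    | cast b' =>
      rw [fA_castSucc, fA_castSucc] at hxy
      split_ifs at hxy with h1 h2 h2
      · exact congrArg Fin.castSucc (σ.injective (Fin.castSucc_inj.1 (h1.trans h2.symm)))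
      · exact absurd hxy.symm (Fin.castSucc_lt_last _).ne
      · exact absurd hxy (Fin.castSucc_lt_last _).ne
      · rw [Fin.castSucc_inj] at hxy ⊢
        exact σ.injective hxy

noncomputable def insA (σ : Equiv.Perm (Fin m)) (t : Fin (m + 1)) : Equiv.Perm (Fin (m + 1)) :=
  Equiv.ofBijective (fA σ t) (Finite.injective_iff_bijective.1 (fA_inj σ t))

@[simp] lemma insA_last (σ : Equiv.Perm (Fin m)) (t : Fin (m + 1)) :
    insA σ t (Fin.last m) = t := fA_last σ t

@[simp] lemma insA_castSucc (σ : Equiv.Perm (Fin m)) (t : Fin (m + 1)) (b : Fin m) :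
    insA σ t b.castSucc = if (σ b).castSucc = t then Fin.last m else (σ b).castSucc :=
  fA_castSucc σ t b

lemma insA_bij :
    Function.Bijective (fun p : Equiv.Perm (Fin m) × Fin (m + 1) => insA p.1 p.2) := by
  rw [Fintype.bijective_iff_injective_and_card]
  constructor
  · rintro ⟨σ₁, t₁⟩ ⟨σ₂, t₂⟩ h
    have happ : ∀ x, insA σ₁ t₁ x = insA σ₂ t₂ x := fun x => congrFun (congrArg _ h) x
    have ht : t₁ = t₂ := by simpa using happ (Fin.last m)
    subst ht
    have hσ : σ₁ = σ₂ := by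
      refine Equiv.ext fun b => ?_
      have hb := happ b.castSucc
      rw [insA_castSucc, insA_castSucc] at hb
      split_ifs at hb with h1 h2 h2
      · exact Fin.castSucc_inj.1 (h1.trans h2.symm)
      · exact absurd hb.symm (Fin.castSucc_lt_last _).ne
      · exact absurd hb (Fin.castSucc_lt_last _).ne
      · exact Fin.castSucc_inj.1 hb
    rw [hσ]
  · simp [Fintype.card_perm, Nat.factorial_succ, Nat.mul_comm]

lemma antiexc_insA_last (σ : Equiv.Perm (Fin m)) :
    antiexcNum (insA σ (Fin.last m)) = antiexcNum σ := by
  rw [antiexcNum_eq, Fin.sum_univ_castSucc, antiexcNum_eq]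
  have h1 : (if insA σ (Fin.last m) (Fin.last m) < Fin.last m then 1 else 0) = 0 := by simp
  rw [h1, add_zero]
  refine Finset.sum_congr rfl fun b _ => ?_
  rw [insA_castSucc, if_neg (Fin.castSucc_lt_last _).ne]
  simp [Fin.castSucc_lt_castSucc_iff]

lemma antiexc_insA_castSucc (σ : Equiv.Perm (Fin m)) (c : Fin m) :
    antiexcNum (insA σ c.castSucc) =
      if c < σ⁻¹ c then antiexcNum σ else antiexcNum σ + 1 := by
  rw [antiexcNum_eq, Fin.sum_univ_castSucc]
  have h1 : (if insA σ c.castSucc (Fin.last m) < Fin.last m then 1 else 0) = 1 := by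
    simp [Fin.castSucc_lt_last]
  have h2 : ∀ b : Fin m, (if insA σ c.castSucc b.castSucc < b.castSucc then 1 else 0)
      = if σ b = c then 0 else if σ b < b then 1 else 0 := by
    intro b
    rw [insA_castSucc]
    by_cases hb : σ b = c
    · rw [if_pos (show (σ b).castSucc = c.castSucc from by rw [hb]),
        if_neg (asymm (Fin.castSucc_lt_last b)), if_pos hb]
    · rw [if_neg (fun hc => hb (Fin.castSucc_inj.1 hc)), if_neg hb]
      simp [Fin.castSucc_lt_castSucc_iff]
  rw [Finset.sum_congr rfl fun b _ => h2 b, h1]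
  set b₀ := σ⁻¹ c with hb₀
  have hσb₀ : σ b₀ = c := by simp [hb₀]
  rw [← Finset.add_sum_erase _ _ (Finset.mem_univ b₀), if_pos hσb₀, zero_add]
  have h3 : ∑ b ∈ Finset.univ.erase b₀, (if σ b = c then 0 else if σ b < b then 1 else 0)
      = ∑ b ∈ Finset.univ.erase b₀, (if σ b < b then 1 else 0) := by
    refine Finset.sum_congr rfl fun b hb => ?_
    rw [if_neg]
    intro hc
    exact (Finset.mem_erase.1 hb).1 (by rw [hb₀, ← hc]; exact (σ.symm_apply_apply b).symm)
  rw [h3]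
  have h4 : antiexcNum σ = (if σ b₀ < b₀ then 1 else 0) + ∑ b ∈ Finset.univ.erase b₀, (if σ b < b then 1 else 0) := by
    rw [antiexcNum_eq, ← Finset.add_sum_erase _ _ (Finset.mem_univ b₀)]
  rw [hσb₀] at h4
  by_cases hc : c < b₀
  · rw [if_pos hc] at h4 ⊢; omega
  · rw [if_neg hc] at h4 ⊢; omega

lemma sumA (σ : Equiv.Perm (Fin m)) :
    ∑ t : Fin (m + 1), (X : ℝ[X]) ^ antiexcNum (insA σ t) =
      ((antiexcNum σ + 1 : ℕ) : ℝ[X]) * X ^ antiexcNum σ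
        + ((m - antiexcNum σ : ℕ) : ℝ[X]) * X ^ (antiexcNum σ + 1) := by
  rw [Fin.sum_univ_castSucc, antiexc_insA_last]
  have h1 : ∀ c : Fin m, (X : ℝ[X]) ^ antiexcNum (insA σ c.castSucc)
      = if c < σ⁻¹ c then (X:ℝ[X]) ^ antiexcNum σ else (X:ℝ[X]) ^ (antiexcNum σ + 1) := by
    intro c
    rw [antiexc_insA_castSucc, apply_ite (fun k => (X:ℝ[X]) ^ k)]
  rw [Finset.sum_congr rfl fun c _ => h1 c, Finset.sum_ite, Finset.sum_const, Finset.sum_const,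
    card_lt_inv]
  have h5 : (Finset.univ.filter fun c : Fin m => ¬ c < σ⁻¹ c).card = m - antiexcNum σ := by
    have := Finset.card_filter_add_card_filter_not (s := (Finset.univ : Finset (Fin m)))
      (p := fun c : Fin m => c < σ⁻¹ c)
    rw [card_lt_inv] at this
    simp only [Finset.card_univ, Fintype.card_fin] at this
    omega
  rw [h5]
  have hle : antiexcNum σ ≤ m := by
    rw [antiexcNum]
    calc (Finset.univ.filter fun i : Fin m => σ i < i).card ≤ Finset.univ.card :=
      Finset.card_filter_le _ _
    _ = m := by simp
  rw [nsmul_eq_mul, nsmul_eq_mul]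
  push_cast
  ring
-- PART C : insertion for descents
section InsD
variable {m : ℕ}

noncomputable def fD (τ : Equiv.Perm (Fin m)) (p : Fin (m + 1)) : Fin (m + 1) → Fin (m + 1) :=
  fun i =>
    if h1 : (i : ℕ) < (p : ℕ) then (τ ⟨(i : ℕ), by have := p.isLt; omega⟩).castSucc
    else if h2 : (i : ℕ) = (p : ℕ) then Fin.last m
    else (τ ⟨(i : ℕ) - 1, by have := i.isLt; omega⟩).castSucc

lemma fD_lt (τ : Equiv.Perm (Fin m)) (p : Fin (m + 1)) {i : Fin (m + 1)} (h : (i : ℕ) < (p : ℕ)) :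
    fD τ p i = (τ ⟨(i : ℕ), by have := p.isLt; omega⟩).castSucc := by
  simp only [fD]; rw [dif_pos h]

lemma fD_eq (τ : Equiv.Perm (Fin m)) (p : Fin (m + 1)) {i : Fin (m + 1)} (h : (i : ℕ) = (p : ℕ)) :
    fD τ p i = Fin.last m := by
  simp only [fD]; rw [dif_neg (by omega), dif_pos h]

lemma fD_gt (τ : Equiv.Perm (Fin m)) (p : Fin (m + 1)) {i : Fin (m + 1)} (h : (p : ℕ) < (i : ℕ)) :
    fD τ p i = (τ ⟨(i : ℕ) - 1, by have := i.isLt; omega⟩).castSucc := by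
  simp only [fD]; rw [dif_neg (by omega), dif_neg (by omega)]

lemma fD_lt' (τ : Equiv.Perm (Fin m)) (p : Fin (m + 1)) (i : Fin (m + 1)) {k : ℕ}
    (h : (i : ℕ) < (p : ℕ)) (hk : (i : ℕ) = k) (hkm : k < m) :
    fD τ p i = (τ ⟨k, hkm⟩).castSucc := by
  subst hk; exact fD_lt τ p h

lemma fD_gt' (τ : Equiv.Perm (Fin m)) (p : Fin (m + 1)) (i : Fin (m + 1)) {k : ℕ}
    (h : (p : ℕ) < (i : ℕ)) (hk : (i : ℕ) - 1 = k) (hkm : k < m) :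
    fD τ p i = (τ ⟨k, hkm⟩).castSucc := by
  subst hk; exact fD_gt τ p h

lemma fD_inj (τ : Equiv.Perm (Fin m)) (p : Fin (m + 1)) : Function.Injective (fD τ p) := by
  intro x y hxy
  rcases lt_trichotomy ((x : ℕ)) ((p : ℕ)) with hx | hx | hx <;>
    rcases lt_trichotomy ((y : ℕ)) ((p : ℕ)) with hy | hy | hy
  · rw [fD_lt τ p hx, fD_lt τ p hy] at hxy
    have := congrArg Fin.val (τ.injective (Fin.castSucc_inj.1 hxy))
    simp only at this
    exact Fin.ext this
  · rw [fD_lt τ p hx, fD_eq τ p hy] at hxy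
    exact absurd hxy (Fin.castSucc_lt_last _).ne
  · rw [fD_lt τ p hx, fD_gt τ p hy] at hxy
    have := congrArg Fin.val (τ.injective (Fin.castSucc_inj.1 hxy))
    simp only at this
    omega
  · rw [fD_eq τ p hx, fD_lt τ p hy] at hxy
    exact absurd hxy.symm (Fin.castSucc_lt_last _).ne
  · exact Fin.ext (hx.trans hy.symm)
  · rw [fD_eq τ p hx, fD_gt τ p hy] at hxy
    exact absurd hxy.symm (Fin.castSucc_lt_last _).ne
  · rw [fD_gt τ p hx, fD_lt τ p hy] at hxy
    have := congrArg Fin.val (τ.injective (Fin.castSucc_inj.1 hxy))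
    simp only at this
    omega
  · rw [fD_gt τ p hx, fD_eq τ p hy] at hxy
    exact absurd hxy (Fin.castSucc_lt_last _).ne
  · rw [fD_gt τ p hx, fD_gt τ p hy] at hxy
    have := congrArg Fin.val (τ.injective (Fin.castSucc_inj.1 hxy))
    simp only at this
    have hx' := x.isLt
    have hy' := y.isLt
    exact Fin.ext (by omega)

noncomputable def insD (τ : Equiv.Perm (Fin m)) (p : Fin (m + 1)) : Equiv.Perm (Fin (m + 1)) :=
  Equiv.ofBijective (fD τ p) (Finite.injective_iff_bijective.1 (fD_inj τ p))

lemma insD_apply (τ : Equiv.Perm (Fin m)) (p : Fin (m + 1)) (i : Fin (m + 1)) :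
    insD τ p i = fD τ p i := rfl

lemma insD_bij :
    Function.Bijective (fun pr : Equiv.Perm (Fin m) × Fin (m + 1) => insD pr.1 pr.2) := by
  rw [Fintype.bijective_iff_injective_and_card]
  constructor
  · rintro ⟨τ₁, p₁⟩ ⟨τ₂, p₂⟩ h
    have h' : insD τ₁ p₁ = insD τ₂ p₂ := h
    have happ : ∀ x, fD τ₁ p₁ x = fD τ₂ p₂ x := fun x => DFunLike.congr_fun h' x
    have hp : p₁ = p₂ := by
      have h1 := happ p₁
      rw [fD_eq τ₁ p₁ rfl] at h1
      rcases lt_trichotomy ((p₁ : ℕ)) ((p₂ : ℕ)) with hc | hc | hc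
      · rw [fD_lt τ₂ p₂ hc] at h1
        exact absurd h1.symm (Fin.castSucc_lt_last _).ne
      · exact Fin.ext hc
      · rw [fD_gt τ₂ p₂ hc] at h1
        exact absurd h1.symm (Fin.castSucc_lt_last _).ne
    subst hp
    have hτ : τ₁ = τ₂ := by
      refine Equiv.ext fun b => ?_
      by_cases hb : (b : ℕ) < (p₁ : ℕ)
      · have h1 := happ b.castSucc
        rw [fD_lt τ₁ p₁ (show ((b.castSucc : Fin (m+1)) : ℕ) < (p₁ : ℕ) from hb),
          fD_lt τ₂ p₁ (show ((b.castSucc : Fin (m+1)) : ℕ) < (p₁ : ℕ) from hb)] at h1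
        have h2 := Fin.castSucc_inj.1 h1
        simpa [Fin.eta] using h2
      · have h1 := happ b.succ
        have hgt : (p₁ : ℕ) < ((b.succ : Fin (m+1)) : ℕ) := by
          simp only [Fin.val_succ]
          have := p₁.isLt
          omega
        rw [fD_gt τ₁ p₁ hgt, fD_gt τ₂ p₁ hgt] at h1
        have h2 := Fin.castSucc_inj.1 h1
        simpa [Fin.eta] using h2
    rw [hτ]
  · simp [Fintype.card_perm, Nat.factorial_succ, Nat.mul_comm]

lemma des_insD (τ : Equiv.Perm (Fin m)) (p : Fin (m + 1)) :
    desNum (insD τ p) =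
      if ((p : ℕ) = m) ∨ (1 ≤ (p : ℕ) ∧ descentAt τ ((p : ℕ) - 1)) then desNum τ
      else desNum τ + 1 := by
  classical
  have hqm : (p : ℕ) ≤ m := by have := p.isLt; omega
  have ev1 : ∀ j, j + 1 < (p : ℕ) → dfun (insD τ p) j = dfun τ j := by
    intro j hj
    simp only [dfun]
    refine if_congr ?_ rfl rfl
    constructor
    · rintro ⟨h, hlt⟩
      refine ⟨by omega, ?_⟩
      rw [insD_apply, insD_apply, fD_lt τ p (show j + 1 < (p:ℕ) from hj),
        fD_lt τ p (show j < (p:ℕ) by omega)] at hlt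
      rw [Fin.castSucc_lt_castSucc_iff] at hlt
      exact hlt
    · rintro ⟨h, hlt⟩
      refine ⟨by omega, ?_⟩
      rw [insD_apply, insD_apply, fD_lt τ p (show j + 1 < (p:ℕ) from hj),
        fD_lt τ p (show j < (p:ℕ) by omega)]
      rw [Fin.castSucc_lt_castSucc_iff]
      exact hlt
  have ev2 : ∀ j, j + 1 = (p : ℕ) → dfun (insD τ p) j = 0 := by
    intro j hj
    apply dfun_neg
    rintro ⟨h, hlt⟩
    rw [insD_apply, insD_apply, fD_eq τ p (show j + 1 = (p:ℕ) from hj),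
      fD_lt τ p (show j < (p:ℕ) by omega)] at hlt
    exact absurd hlt (asymm (Fin.castSucc_lt_last _))
  have ev3 : (p : ℕ) < m → dfun (insD τ p) (p : ℕ) = 1 := by
    intro hlt
    apply dfun_pos
    refine ⟨by omega, ?_⟩
    rw [insD_apply, insD_apply, fD_eq τ p (show ((p:ℕ) : ℕ) = (p:ℕ) from rfl),
      fD_gt τ p (show (p:ℕ) < (p:ℕ) + 1 by omega)]
    exact Fin.castSucc_lt_last _
  have ev5 : ∀ j, (p : ℕ) < j → j < m → dfun (insD τ p) j = dfun τ (j - 1) := by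
    intro j h1 h2
    simp only [dfun]
    refine if_congr ?_ rfl rfl
    constructor
    · rintro ⟨h, hlt⟩
      refine ⟨by omega, ?_⟩
      rw [insD_apply, insD_apply,
        fD_gt' τ p ⟨j + 1, h⟩ (show (p:ℕ) < j + 1 by omega) (show j + 1 - 1 = (j - 1) + 1 by omega) (by omega),
        fD_gt' τ p ⟨j, by omega⟩ (show (p:ℕ) < j from h1) (show j - 1 = j - 1 from rfl) (by omega)] at hlt
      rw [Fin.castSucc_lt_castSucc_iff] at hlt
      exact hlt
    · rintro ⟨h, hlt⟩
      refine ⟨by omega, ?_⟩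
      rw [insD_apply, insD_apply,
        fD_gt' τ p ⟨j + 1, by omega⟩ (show (p:ℕ) < j + 1 by omega) (show j + 1 - 1 = (j - 1) + 1 by omega) (by omega),
        fD_gt' τ p ⟨j, by omega⟩ (show (p:ℕ) < j from h1) (show j - 1 = j - 1 from rfl) (by omega)]
      rw [Fin.castSucc_lt_castSucc_iff]
      exact hlt
  have hS : desNum (insD τ p) = ∑ j ∈ Finset.range m, dfun (insD τ p) j := by
    rw [desNum_eq' (insD τ p)]
    norm_num
  have hdes : desNum τ = ∑ j ∈ Finset.range (m - 1), dfun τ j := desNum_eq' τ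
  rw [hS]
  by_cases hA : (p : ℕ) = m
  · rw [if_pos (Or.inl hA)]
    rw [desNum_eq τ]
    refine Finset.sum_congr rfl fun j hj => ?_
    rw [Finset.mem_range] at hj
    rcases lt_or_eq_of_le (Nat.succ_le_of_lt hj) with hj1 | hj1
    · exact ev1 j (by omega)
    · rw [ev2 j (by omega)]
      refine (dfun_neg ?_).symm
      intro hdes'
      have := hdes'.1
      omega
  · have hqm' : (p : ℕ) < m := by omega
    have hsplit : ∑ j ∈ Finset.range m, dfun (insD τ p) j
        = (∑ j ∈ Finset.range (p : ℕ), dfun (insD τ p) j) + dfun (insD τ p) (p : ℕ) + ∑ j ∈ Finset.Ico ((p : ℕ) + 1) m, dfun (insD τ p) j := by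
      rw [Finset.range_eq_Ico,
        ← Finset.sum_Ico_consecutive (dfun (insD τ p)) (Nat.zero_le (p : ℕ)) (le_of_lt hqm'),
        ← Finset.range_eq_Ico, Finset.sum_eq_sum_Ico_succ_bot hqm' (dfun (insD τ p))]
      ring
    have htail : ∑ j ∈ Finset.Ico ((p : ℕ) + 1) m, dfun (insD τ p) j = ∑ j ∈ Finset.Ico (p : ℕ) (m - 1), dfun τ j := by
      rw [Finset.sum_Ico_eq_sum_range, Finset.sum_Ico_eq_sum_range]
      have hlen : m - ((p : ℕ) + 1) = m - 1 - (p : ℕ) := by omega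
      rw [hlen]
      refine Finset.sum_congr rfl fun k hk => ?_
      rw [Finset.mem_range] at hk
      rw [ev5 ((p : ℕ) + 1 + k) (by omega) (by omega)]
      congr 1
      omega
    have hhead : ∑ j ∈ Finset.range (p : ℕ), dfun (insD τ p) j = ∑ j ∈ Finset.range ((p : ℕ) - 1), dfun τ j := by
      rcases Nat.eq_zero_or_pos (p : ℕ) with hq0 | hq0
      · rw [hq0]
        simp
      · have hq1 : (p : ℕ) = ((p : ℕ) - 1) + 1 := by omega
        rw [hq1, Finset.sum_range_succ, ev2 ((p : ℕ) - 1) (by omega), add_zero]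
        refine Finset.sum_congr rfl fun j hj => ?_
        rw [Finset.mem_range] at hj
        exact ev1 j (by omega)
    rw [hsplit, htail, hhead, ev3 hqm']
    rcases Nat.eq_zero_or_pos (p : ℕ) with hq0 | hq0
    · rw [if_neg (by rintro (h | ⟨h, _⟩) <;> omega)]
      rw [hq0]
      simp only [Nat.zero_sub, Finset.range_zero, Finset.sum_empty, zero_add]
      rw [hdes, Finset.range_eq_Ico]
      omega
    · have hsplit2 : ∑ j ∈ Finset.range (m - 1), dfun τ j
          = (∑ j ∈ Finset.range ((p : ℕ) - 1), dfun τ j) + dfun τ ((p : ℕ) - 1)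
            + ∑ j ∈ Finset.Ico (p : ℕ) (m - 1), dfun τ j := by
        rw [Finset.range_eq_Ico,
          ← Finset.sum_Ico_consecutive (dfun τ) (Nat.zero_le ((p : ℕ) - 1)) (show (p:ℕ) - 1 ≤ m - 1 by omega),
          ← Finset.range_eq_Ico, Finset.sum_eq_sum_Ico_succ_bot (show (p:ℕ) - 1 < m - 1 by omega) (dfun τ)]
        have : (p : ℕ) - 1 + 1 = (p : ℕ) := by omega
        rw [this]
        ring
      rw [hdes, hsplit2]
      by_cases hdq : descentAt τ ((p : ℕ) - 1)
      · rw [if_pos (Or.inr ⟨hq0, hdq⟩)]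
        have : dfun τ ((p : ℕ) - 1) = 1 := dfun_pos hdq
        omega
      · have hnot : ¬(((p : ℕ) = m) ∨ (1 ≤ (p : ℕ) ∧ descentAt τ ((p : ℕ) - 1))) := by
          rintro (h | ⟨h1, h2⟩)
          · omega
          · exact hdq h2
        rw [if_neg hnot]
        have : dfun τ ((p : ℕ) - 1) = 0 := dfun_neg hdq
        omega

lemma desNum_eq_card {m : ℕ} (τ : Equiv.Perm (Fin m)) :
    desNum τ = (Finset.univ.filter fun i : Fin m => descentAt τ (i : ℕ)).card := by
  rw [desNum_eq, ← Fin.sum_univ_eq_sum_range (dfun τ) m, Finset.card_filter]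
  rfl

lemma card_keep (τ : Equiv.Perm (Fin m)) :
    (Finset.univ.filter fun p : Fin (m + 1) =>
      ((p : ℕ) = m) ∨ (1 ≤ (p : ℕ) ∧ descentAt τ ((p : ℕ) - 1))).card = desNum τ + 1 := by
  rw [Finset.filter_or, Finset.card_union_of_disjoint]
  · have h1 : (Finset.univ.filter fun p : Fin (m + 1) => (p : ℕ) = m) = {Fin.last m} := by
      ext p
      simp [Fin.ext_iff]
    rw [h1, Finset.card_singleton, desNum_eq_card]
    have h2 : (Finset.univ.filter fun p : Fin (m + 1) =>
        1 ≤ (p : ℕ) ∧ descentAt τ ((p : ℕ) - 1)).card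
        = (Finset.univ.filter fun i : Fin m => descentAt τ (i : ℕ)).card := by
      refine Finset.card_bij' (fun p hp => ⟨(p : ℕ) - 1, ?_⟩)
        (fun i hi => ⟨(i : ℕ) + 1, by omega⟩) ?_ ?_ ?_ ?_
      · rw [Finset.mem_filter] at hp
        have := hp.2.2.1
        omega
      · intro p hp
        rw [Finset.mem_filter] at hp ⊢
        exact ⟨Finset.mem_univ _, hp.2.2⟩
      · intro i hi
        rw [Finset.mem_filter] at hi ⊢
        exact ⟨Finset.mem_univ _, (show 1 ≤ (i:ℕ) + 1 by omega), hi.2⟩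
      · intro p hp
        rw [Finset.mem_filter] at hp
        obtain ⟨-, h1p, -⟩ := hp
        exact Fin.ext (show ((p : ℕ) - 1) + 1 = (p : ℕ) by omega)
      · intro i hi
        exact Fin.ext (show ((i : ℕ) + 1) - 1 = (i : ℕ) by omega)
    omega
  · rw [Finset.disjoint_filter]
    rintro p hp h1 ⟨h2, h3⟩
    have := h3.1
    omega
-- PART D : sums and core induction
lemma sumD {m : ℕ} (τ : Equiv.Perm (Fin m)) :
    ∑ p : Fin (m + 1), (X : ℝ[X]) ^ desNum (insD τ p) =
      ((desNum τ + 1 : ℕ) : ℝ[X]) * X ^ desNum τ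
        + ((m - desNum τ : ℕ) : ℝ[X]) * X ^ (desNum τ + 1) := by
  have h1 : ∀ p : Fin (m + 1), (X : ℝ[X]) ^ desNum (insD τ p)
      = if ((p : ℕ) = m) ∨ (1 ≤ (p : ℕ) ∧ descentAt τ ((p : ℕ) - 1)) then (X : ℝ[X]) ^ desNum τ
        else (X : ℝ[X]) ^ (desNum τ + 1) := by
    intro p
    rw [des_insD, apply_ite (fun k => (X : ℝ[X]) ^ k)]
  rw [Finset.sum_congr rfl fun p _ => h1 p, Finset.sum_ite, Finset.sum_const, Finset.sum_const,
    card_keep]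
  have hle : desNum τ + 1 ≤ m + 1 := by
    have := card_keep τ
    have h2 := Finset.card_filter_le (Finset.univ : Finset (Fin (m + 1)))
      (fun p : Fin (m + 1) => ((p : ℕ) = m) ∨ (1 ≤ (p : ℕ) ∧ descentAt τ ((p : ℕ) - 1)))
    rw [this] at h2
    simpa using h2
  have h5 : (Finset.univ.filter fun p : Fin (m + 1) =>
      ¬(((p : ℕ) = m) ∨ (1 ≤ (p : ℕ) ∧ descentAt τ ((p : ℕ) - 1)))).card = m - desNum τ := by
    have := Finset.card_filter_add_card_filter_not
      (s := (Finset.univ : Finset (Fin (m + 1))))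
      (p := fun p : Fin (m + 1) => ((p : ℕ) = m) ∨ (1 ≤ (p : ℕ) ∧ descentAt τ ((p : ℕ) - 1)))
    rw [card_keep] at this
    simp only [Finset.card_univ, Fintype.card_fin] at this
    omega
  rw [h5, nsmul_eq_mul, nsmul_eq_mul]

lemma core_s8 : ∀ m : ℕ, ∑ σ : Equiv.Perm (Fin m), (X : ℝ[X]) ^ antiexcNum σ
    = ∑ τ : Equiv.Perm (Fin m), (X : ℝ[X]) ^ desNum τ := by
  intro m
  induction m with
  | zero =>
    refine Finset.sum_congr rfl fun σ _ => ?_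
    simp [antiexcNum, desNum]
  | succ m ih =>
    have hA := Fintype.sum_bijective _ (insA_bij (m := m))
      (fun pr : Equiv.Perm (Fin m) × Fin (m + 1) => (X : ℝ[X]) ^ antiexcNum (insA pr.1 pr.2))
      (fun σ' => (X : ℝ[X]) ^ antiexcNum σ') (fun pr => rfl)
    have hD := Fintype.sum_bijective _ (insD_bij (m := m))
      (fun pr : Equiv.Perm (Fin m) × Fin (m + 1) => (X : ℝ[X]) ^ desNum (insD pr.1 pr.2))
      (fun τ' => (X : ℝ[X]) ^ desNum τ') (fun pr => rfl)
    rw [← hA, ← hD, Fintype.sum_prod_type, Fintype.sum_prod_type]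
    rw [Finset.sum_congr rfl fun σ _ => sumA σ, Finset.sum_congr rfl fun τ _ => sumD τ]
    exact transfer (fun σ => antiexcNum σ) (fun τ => desNum τ) ih
      (fun k => ((k + 1 : ℕ) : ℝ[X]) * X ^ k + ((m - k : ℕ) : ℝ[X]) * X ^ (k + 1))

def ascentAt {m : ℕ} (τ : Equiv.Perm (Fin m)) (j : ℕ) : Prop :=
  ∃ h : j + 1 < m, τ ⟨j, by omega⟩ < τ ⟨j + 1, h⟩

noncomputable def afun {m : ℕ} (τ : Equiv.Perm (Fin m)) : ℕ → ℕ :=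
  fun j => if ascentAt τ j then 1 else 0

lemma dfun_add_afun {m : ℕ} (τ : Equiv.Perm (Fin m)) {j : ℕ} (hj : j + 1 < m) :
    dfun τ j + afun τ j = 1 := by
  rcases lt_trichotomy (τ ⟨j + 1, hj⟩) (τ ⟨j, by omega⟩) with h | h | h
  · rw [dfun_pos ⟨hj, h⟩, afun, if_neg]
    rintro ⟨h', hlt⟩
    exact absurd hlt (asymm h)
  · exact absurd (τ.injective h) (by simp [Fin.ext_iff])
  · rw [dfun_neg (fun hc => absurd hc.2 (asymm h)), afun, if_pos ⟨hj, h⟩]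

lemma desNum_le {m : ℕ} (τ : Equiv.Perm (Fin m)) : desNum τ ≤ m - 1 := by
  rw [desNum_eq']
  calc ∑ j ∈ Finset.range (m - 1), dfun τ j ≤ ∑ j ∈ Finset.range (m - 1), 1 :=
    Finset.sum_le_sum fun j _ => by rw [dfun]; split <;> omega
  _ = m - 1 := by simp

lemma desNum_rev {m : ℕ} (τ : Equiv.Perm (Fin m)) :
    desNum (τ * Fin.revPerm) = (m - 1) - desNum τ := by
  rcases Nat.eq_zero_or_pos m with hm | hm
  · subst hm
    simp [desNum]
  obtain ⟨k, rfl⟩ : ∃ k, m = k + 1 := ⟨m - 1, by omega⟩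
  have hstep : ∀ j, j < k → dfun (τ * Fin.revPerm) j = afun τ (k - 1 - j) := by
    intro j hj
    simp only [dfun, afun]
    refine if_congr ?_ rfl rfl
    constructor
    · rintro ⟨h, hlt⟩
      refine ⟨by omega, ?_⟩
      simp only [Equiv.Perm.mul_apply, Fin.revPerm_apply] at hlt
      have e1 : (⟨j + 1, h⟩ : Fin (k + 1)).rev = ⟨k - 1 - j, by omega⟩ := by
        rw [Fin.ext_iff, Fin.val_rev]
        simp
        omega
      have e2 : (⟨j, by omega⟩ : Fin (k + 1)).rev = ⟨(k - 1 - j) + 1, by omega⟩ := by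
        rw [Fin.ext_iff, Fin.val_rev]
        simp
        omega
      rw [e1, e2] at hlt
      exact hlt
    · rintro ⟨h, hlt⟩
      refine ⟨by omega, ?_⟩
      simp only [Equiv.Perm.mul_apply, Fin.revPerm_apply]
      have e1 : (⟨j + 1, by omega⟩ : Fin (k + 1)).rev = ⟨k - 1 - j, by omega⟩ := by
        rw [Fin.ext_iff, Fin.val_rev]
        simp
        omega
      have e2 : (⟨j, by omega⟩ : Fin (k + 1)).rev = ⟨(k - 1 - j) + 1, by omega⟩ := by
        rw [Fin.ext_iff, Fin.val_rev]
        simp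
        omega
      rw [e1, e2]
      exact hlt
  have h1 : desNum (τ * Fin.revPerm) = ∑ j ∈ Finset.range k, afun τ (k - 1 - j) := by
    rw [desNum_eq']
    refine Finset.sum_congr (by norm_num) fun j hj => ?_
    rw [Finset.mem_range] at hj
    exact hstep j hj
  have h2 : ∑ j ∈ Finset.range k, afun τ (k - 1 - j) = ∑ j ∈ Finset.range k, afun τ j :=
    Finset.sum_range_reflect (afun τ) k
  have h3 : desNum τ + ∑ j ∈ Finset.range k, afun τ j = k := by
    rw [desNum_eq']
    show ∑ j ∈ Finset.range k, dfun τ j + ∑ j ∈ Finset.range k, afun τ j = k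
    rw [← Finset.sum_add_distrib]
    rw [Finset.sum_congr rfl fun j hj => dfun_add_afun τ
      (show j + 1 < k + 1 by rw [Finset.mem_range] at hj; omega)]
    simp
  rw [h1, h2]
  omega
-- PART E : per-m lemma
lemma F_one {m : ℕ} (hm : 1 ≤ m) :
    ∑ σ : Equiv.Perm (Fin m), (X : ℝ[X]) ^ (m - antiexcNum σ) = X * EulerianPoly m := by
  have h1 : ∑ σ : Equiv.Perm (Fin m), (X : ℝ[X]) ^ (m - antiexcNum σ)
      = ∑ τ : Equiv.Perm (Fin m), (X : ℝ[X]) ^ (m - desNum τ) :=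
    transfer (fun σ => antiexcNum σ) (fun τ => desNum τ) (core_s8 m)
      (fun k => (X : ℝ[X]) ^ (m - k))
  have h2 := Fintype.sum_bijective (fun τ : Equiv.Perm (Fin m) => τ * Fin.revPerm)
    (Equiv.mulRight Fin.revPerm).bijective
    (fun τ : Equiv.Perm (Fin m) => (X : ℝ[X]) ^ (m - desNum (τ * Fin.revPerm)))
    (fun σ : Equiv.Perm (Fin m) => (X : ℝ[X]) ^ (m - desNum σ)) (fun τ => rfl)
  have h3 : ∀ τ : Equiv.Perm (Fin m), (X : ℝ[X]) ^ (m - desNum (τ * Fin.revPerm))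
      = (X : ℝ[X]) ^ (desNum τ + 1) := by
    intro τ
    rw [desNum_rev]
    congr 1
    have := desNum_le τ
    omega
  rw [h1, ← h2, Finset.sum_congr rfl fun τ _ => h3 τ, EulerianPoly, Finset.mul_sum]
  exact Finset.sum_congr rfl fun τ _ => by rw [pow_succ, mul_comm]

lemma F_zero : ∑ σ : Equiv.Perm (Fin 0), (X : ℝ[X]) ^ ((0 : ℕ) - antiexcNum σ) = 1 := by
  rw [Finset.sum_eq_single_of_mem (1 : Equiv.Perm (Fin 0)) (Finset.mem_univ _)]
  · simp
  · intro σ _ hσ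
    exact absurd (Subsingleton.elim σ 1) hσ

-- PART F : support decomposition
noncomputable def suppSet {n : ℕ} (π : Equiv.Perm (Fin n)) : Finset (Fin n) :=
  Finset.univ.filter fun i => π i ≠ i

noncomputable def fixSet {n : ℕ} (π : Equiv.Perm (Fin n)) : Finset (Fin n) :=
  Finset.univ.filter fun i => π i = i

lemma fixNum_eq {n : ℕ} (π : Equiv.Perm (Fin n)) : fixNum π = (fixSet π).card := rfl

lemma mem_suppSet {n : ℕ} {π : Equiv.Perm (Fin n)} {i : Fin n} :
    i ∈ suppSet π ↔ π i ≠ i := by simp [suppSet]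

lemma mem_fixSet {n : ℕ} {π : Equiv.Perm (Fin n)} {i : Fin n} :
    i ∈ fixSet π ↔ π i = i := by simp [fixSet]

lemma suppSet_card {n : ℕ} (π : Equiv.Perm (Fin n)) :
    (suppSet π).card = excNum π + antiexcNum π := by
  rw [suppSet, excNum, antiexcNum]
  have hun : (Finset.univ.filter fun i => π i ≠ i)
      = (Finset.univ.filter fun i : Fin n => i < π i) ∪ (Finset.univ.filter fun i => π i < i) := by
    ext i
    simp only [Finset.mem_filter, Finset.mem_union, Finset.mem_univ, true_and]
    constructor
    · intro h
      exact (lt_or_gt_of_ne h).symm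
    · rintro (h | h)
      · exact ne_of_gt h
      · exact ne_of_lt h
  rw [hun, Finset.card_union_of_disjoint]
  rw [Finset.disjoint_filter]
  intro i _ h1 h2
  exact absurd h2 (asymm h1)

lemma antiexc_le_supp {n : ℕ} {π : Equiv.Perm (Fin n)} {i : Fin n} (h : π i < i) :
    i ∈ suppSet π := mem_suppSet.2 (ne_of_lt h)

-- transport along the order iso of a subset
lemma inner_eq {n : ℕ} (T : Finset (Fin n)) :
    ∑ π ∈ Finset.univ.filter (fun π : Equiv.Perm (Fin n) => suppSet π ⊆ T),
      (X : ℝ[X]) ^ (T.card - antiexcNum π)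
    = ∑ σ : Equiv.Perm (Fin T.card), (X : ℝ[X]) ^ (T.card - antiexcNum σ) := by
  classical
  set m := T.card with hm
  let e : Fin m ≃o {x // x ∈ T} := T.orderIsoOfFin rfl
  let ee : Fin m ≃ {x // x ∈ T} := e.toEquiv
  have hmem : ∀ π : Equiv.Perm (Fin n), suppSet π ⊆ T → ∀ x : Fin n, x ∈ T ↔ π x ∈ T := by
    intro π hπ x
    constructor
    · intro hx
      by_cases hfix : π x = x
      · rwa [hfix]
      · exact hπ (mem_suppSet.2 fun hc => hfix (π.injective hc))
    · intro hx
      by_cases hfix : π x = x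
      · rwa [← hfix]
      · exact hπ (mem_suppSet.2 hfix)
  have key : ∀ (z : {x // x ∈ T}) (a : Fin m), ee.symm z < a ↔ z < ee a := by
    intro z a
    have h1 : ee.symm z < a ↔ e (ee.symm z) < e a := (OrderIso.lt_iff_lt e).symm
    have h2 : e (ee.symm z) = z := e.apply_symm_apply z
    rw [h2] at h1
    exact h1
  have hantiexc : ∀ (π : Equiv.Perm (Fin n)) (hπ : suppSet π ⊆ T),
      antiexcNum (Equiv.permCongr ee.symm (π.subtypePerm (fun x => (hmem π hπ x).symm))) = antiexcNum π := by
    intro π hπ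
    rw [antiexcNum, antiexcNum]
    refine Finset.card_bij' (fun a _ => ((ee a : {x // x ∈ T}) : Fin n))
      (fun x hx => ee.symm ⟨x, hπ (antiexc_le_supp (by simpa using (Finset.mem_filter.1 hx).2))⟩)
      ?_ ?_ ?_ ?_
    · intro a ha
      rw [Finset.mem_filter] at ha ⊢
      refine ⟨Finset.mem_univ _, ?_⟩
      have h2 := ha.2
      simp only [Equiv.permCongr_apply, Equiv.symm_symm, Equiv.Perm.subtypePerm_apply] at h2
      exact Subtype.coe_lt_coe.2 ((key _ _).1 h2)
    · intro x hx
      obtain ⟨-, hx2⟩ := Finset.mem_filter.1 hx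
      rw [Finset.mem_filter]
      refine ⟨Finset.mem_univ _, ?_⟩
      simp only [Equiv.permCongr_apply, Equiv.symm_symm, Equiv.Perm.subtypePerm_apply,
        Equiv.apply_symm_apply]
      refine (OrderIso.lt_iff_lt e.symm).2 (Subtype.mk_lt_mk.2 hx2)
    · intro a ha
      simp
    · intro x hx
      simp
  refine Finset.sum_bij' (fun π hπ => Equiv.permCongr ee.symm
      (π.subtypePerm (fun x => (hmem π ((Finset.mem_filter.1 hπ).2) x).symm)))
    (fun σ _ => Equiv.Perm.ofSubtype (Equiv.permCongr ee σ)) ?_ ?_ ?_ ?_ ?_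
  · intro π hπ
    exact Finset.mem_univ _
  · intro σ _
    rw [Finset.mem_filter]
    refine ⟨Finset.mem_univ _, fun x hx => ?_⟩
    by_contra hxT
    exact (mem_suppSet.1 hx) (Equiv.Perm.ofSubtype_apply_of_not_mem _ hxT)
  · intro π hπ
    refine Equiv.ext fun x => ?_
    by_cases hx : x ∈ T
    · rw [Equiv.Perm.ofSubtype_apply_of_mem _ hx]
      simp [Equiv.permCongr_apply]
    · rw [Equiv.Perm.ofSubtype_apply_of_not_mem _ hx]
      by_contra hne
      exact hx ((Finset.mem_filter.1 hπ).2 (mem_suppSet.2 fun hc => hne hc.symm))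
  · intro σ _
    refine Equiv.ext fun a => ?_
    simp only [Equiv.permCongr_apply, Equiv.symm_symm, Equiv.Perm.subtypePerm_apply]
    have hx : ((ee a : {x // x ∈ T}) : Fin n) ∈ T := (ee a).2
    have h1 : ∀ (pf : (Equiv.Perm.ofSubtype (Equiv.permCongr ee σ)) ((ee a : {x // x ∈ T}) : Fin n) ∈ T),
        (⟨(Equiv.Perm.ofSubtype (Equiv.permCongr ee σ)) ((ee a : {x // x ∈ T}) : Fin n), pf⟩
          : {x // x ∈ T}) = (Equiv.permCongr ee σ) (ee a) := by
      intro pf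
      refine Subtype.ext ?_
      show (Equiv.Perm.ofSubtype (Equiv.permCongr ee σ)) ((ee a : {x // x ∈ T}) : Fin n)
        = (((Equiv.permCongr ee σ) (ee a) : {x // x ∈ T}) : Fin n)
      rw [Equiv.Perm.ofSubtype_apply_of_mem _ hx]
    rw [h1]
    simp [Equiv.permCongr_apply, Equiv.symm_apply_apply]
  · intro π hπ
    rw [hantiexc π ((Finset.mem_filter.1 hπ).2)]
-- PART G : final assembly
lemma rhs_expand {n : ℕ} (π : Equiv.Perm (Fin n)) :
    ((1 : ℝ[X]) + X) ^ fixNum π * X ^ excNum π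
      = ∑ S ∈ (fixSet π).powerset, (X : ℝ[X]) ^ (S.card + excNum π) := by
  have h2 := Finset.prod_add (fun _ : Fin n => (X : ℝ[X])) (fun _ => (1 : ℝ[X])) (fixSet π)
  simp only [Finset.prod_const, Finset.prod_const_one, one_pow, mul_one] at h2
  rw [fixNum_eq, add_comm (1 : ℝ[X]) X, h2, Finset.sum_mul]
  exact Finset.sum_congr rfl fun S _ => (pow_add _ _ _).symm

noncomputable def Fval (j : ℕ) : ℝ[X] := ∑ σ : Equiv.Perm (Fin j), (X : ℝ[X]) ^ (j - antiexcNum σ)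

lemma Fval_zero : Fval 0 = 1 := F_zero

lemma Fval_pos {j : ℕ} (hj : 1 ≤ j) : Fval j = X * EulerianPoly j := F_one hj

theorem stmt8' (n : ℕ) (hn : 0 < n) :
    binomialEulerian n = ∑ π : Equiv.Perm (Fin n), (1 + X) ^ fixNum π * X ^ excNum π := by
  classical
  have s1 : ∑ π : Equiv.Perm (Fin n), ((1 : ℝ[X]) + X) ^ fixNum π * X ^ excNum π
      = ∑ π : Equiv.Perm (Fin n), ∑ S ∈ (fixSet π).powerset, (X : ℝ[X]) ^ (S.card + excNum π) :=
    Finset.sum_congr rfl fun π _ => rhs_expand π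
  have s2 : ∑ π : Equiv.Perm (Fin n), ∑ S ∈ (fixSet π).powerset, (X : ℝ[X]) ^ (S.card + excNum π)
      = ∑ T ∈ (Finset.univ : Finset (Fin n)).powerset,
          ∑ π ∈ Finset.univ.filter (fun π : Equiv.Perm (Fin n) => suppSet π ⊆ T),
            (X : ℝ[X]) ^ (T.card - antiexcNum π) := by
    rw [Finset.sum_sigma' Finset.univ (fun π => (fixSet π).powerset)
      (fun π S => (X : ℝ[X]) ^ (S.card + excNum π)),
      Finset.sum_sigma' ((Finset.univ : Finset (Fin n)).powerset)
      (fun T => Finset.univ.filter (fun π : Equiv.Perm (Fin n) => suppSet π ⊆ T))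
      (fun T π => (X : ℝ[X]) ^ (T.card - antiexcNum π))]
    refine Finset.sum_nbij' (fun x => ⟨x.2 ∪ suppSet x.1, x.1⟩)
      (fun y => ⟨y.2, y.1 \ suppSet y.2⟩) ?_ ?_ ?_ ?_ ?_
    · rintro ⟨π, S⟩ hx
      rw [Finset.mem_sigma]
      exact ⟨Finset.mem_powerset.2 (Finset.subset_univ _),
        Finset.mem_filter.2 ⟨Finset.mem_univ _, Finset.subset_union_right⟩⟩
    · rintro ⟨T, π⟩ hy
      rw [Finset.mem_sigma] at hy ⊢
      refine ⟨Finset.mem_univ _, Finset.mem_powerset.2 fun x hx => ?_⟩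
      rw [Finset.mem_sdiff] at hx
      exact mem_fixSet.2 (not_not.1 fun hc => hx.2 (mem_suppSet.2 hc))
    · rintro ⟨π, S⟩ hx
      rw [Finset.mem_sigma] at hx
      have hS : S ⊆ fixSet π := Finset.mem_powerset.1 hx.2
      have hdisj : Disjoint S (suppSet π) := Finset.disjoint_left.2 fun a ha hsupp =>
        (mem_suppSet.1 hsupp) (mem_fixSet.1 (hS ha))
      have : (S ∪ suppSet π) \ suppSet π = S := Finset.union_sdiff_cancel_right hdisj
      simp only [this]
    · rintro ⟨T, π⟩ hy
      rw [Finset.mem_sigma] at hy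
      have hsub : suppSet π ⊆ T := (Finset.mem_filter.1 hy.2).2
      have : (T \ suppSet π) ∪ suppSet π = T := Finset.sdiff_union_of_subset hsub
      simp only [this]
    · rintro ⟨π, S⟩ hx
      rw [Finset.mem_sigma] at hx
      have hS : S ⊆ fixSet π := Finset.mem_powerset.1 hx.2
      have hdisj : Disjoint S (suppSet π) := Finset.disjoint_left.2 fun a ha hsupp =>
        (mem_suppSet.1 hsupp) (mem_fixSet.1 (hS ha))
      dsimp only
      congr 1
      rw [Finset.card_union_of_disjoint hdisj, suppSet_card]
      omega
  have s3 : ∑ T ∈ (Finset.univ : Finset (Fin n)).powerset,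
        ∑ π ∈ Finset.univ.filter (fun π : Equiv.Perm (Fin n) => suppSet π ⊆ T),
          (X : ℝ[X]) ^ (T.card - antiexcNum π)
      = ∑ T ∈ (Finset.univ : Finset (Fin n)).powerset, Fval T.card :=
    Finset.sum_congr rfl fun T _ => inner_eq T
  have s4 : ∑ T ∈ (Finset.univ : Finset (Fin n)).powerset, Fval T.card
      = ∑ j ∈ Finset.range (n + 1), (n.choose j) • Fval j := by
    rw [Finset.sum_powerset]
    have hcard : ((Finset.univ : Finset (Fin n)).card) = n := by simp
    rw [hcard]
    refine Finset.sum_congr rfl fun j hj => ?_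
    rw [Finset.sum_congr rfl (fun T hT => by
        rw [(Finset.mem_powersetCard.1 hT).2]), Finset.sum_const, Finset.card_powersetCard, hcard]
  have s5 : ∑ j ∈ Finset.range (n + 1), (n.choose j) • Fval j = binomialEulerian n := by
    rw [Finset.range_eq_Ico, Finset.sum_eq_sum_Ico_succ_bot (by omega) (fun j => (n.choose j) • Fval j)]
    rw [Finset.Ico_add_one_right_eq_Icc]
    rw [Finset.sum_congr rfl (fun j hj => by
      rw [Fval_pos (Finset.mem_Icc.1 hj).1])]
    rw [binomialEulerian, Finset.mul_sum]
    rw [Fval_zero]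
    simp only [Nat.choose_zero_right, one_smul]
    congr 1
    refine Finset.sum_congr rfl fun j hj => ?_
    rw [nsmul_eq_mul]
    ring
  rw [← s5, ← s4, ← s3, ← s2, ← s1]

theorem stmt8 (n : ℕ) (hn : 0 < n) :
    binomialEulerian n = ∑ π : Equiv.Perm (Fin n), (1 + X) ^ fixNum π * X ^ excNum π := by
  exact stmt8' n hn
end InsD
end InsA
end
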